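/- arXiv:1004.0271 — 5 statements merged into one kernel-verified Lean document; each statement's English description precedes it below -/
import Mathlib

section
/- Let μ be a finite signed Radon measure on ℝⁿ with total variation ‖μ‖ < 1, and fix x₀ with ∫ log⁺(1/|x₀−y|) d|μ|(y) < ∞. Define L̃μ(x) = ∫ log(|x₀−y|/|x−y|) dμ(y). Then for every ball B ⊆ ℝⁿ, ∫_B e^{n·L̃μ(x)} dx < ∞. -/
/-!
Write `μ = μp - μm` and `g x y = log (‖x₀ - y‖ / ‖x - y‖)`, and let the ball lie in
`closedBall x₀ C`. There the triangle inequality gives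
`-g x y ≤ log (1 + C) + log⁺ (1 / ‖x₀ - y‖)`, so by the hypothesis on `x₀` the `μm`-part of
`n L̃μ` is bounded above uniformly. For the `μp`-part, Jensen's inequality for `μp / ‖μp‖` bounds
`exp (n ∫ g x · dμp)` by an average of `exp (α g x y)` with `α = n ‖μp‖ < n`, and
`exp (α g x y) ≤ (1 + C) ^ α (1 + ‖x - y‖ ^ (-α))`. As `‖·‖ ^ (-α)` is locally integrable in
dimension `n > α`, its integrals over the ball are bounded uniformly in `y`; Tonelli concludes.
-/

open Metric MeasureTheory
open scoped ENNReal

namespace Real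

lemma log_div_le_of_le_add {u v C : ℝ} (hC : 0 ≤ C) (hu : 0 ≤ u) (hv : 0 ≤ v)
    (huv : u ≤ v + C) : log (u / v) ≤ log (1 + C) + max (log (1 / v)) 0 := by
  have hlogC : 0 ≤ log (1 + C) := log_nonneg (by linarith)
  rcases hv.eq_or_lt with rfl | hv
  · simp [hlogC]
  rcases hu.eq_or_lt with rfl | hu
  · simp only [zero_div, log_zero]; positivity
  rcases le_or_gt 1 v with h1v | hv1
  · have : u / v ≤ 1 + C := by rw [div_le_iff₀ hv]; nlinarith
    linarith [log_le_log (by positivity) this, le_max_right (log (1 / v)) 0]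
  · have : u / v ≤ (1 + C) * (1 / v) := by
      rw [← mul_div_assoc, mul_one]; gcongr; linarith
    have := log_le_log (by positivity) this
    rw [log_mul (by positivity) (by positivity)] at this
    linarith [le_max_left (log (1 / v)) 0]

lemma exp_mul_log_div_le_of_le_add {u v C α : ℝ} (hC : 0 ≤ C) (hu : 0 ≤ u) (hv : 0 ≤ v)
    (huv : u ≤ v + C) (hα : 0 ≤ α) :
    exp (α * log (u / v)) ≤ (1 + C) ^ α * (1 + v ^ (-α)) := by
  have hexp_posLog : exp (α * max (log (1 / v)) 0) ≤ 1 + v ^ (-α) := by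
    rcases hv.eq_or_lt with rfl | hv
    · simp [rpow_nonneg le_rfl]
    rw [mul_max_of_nonneg _ _ hα, mul_zero, exp_monotone.map_max, exp_zero, one_div, log_inv,
      mul_neg, ← neg_mul, mul_comm, ← rpow_def_of_pos hv]
    exact max_le (le_add_of_nonneg_left zero_le_one) (le_add_of_nonneg_right (by positivity))
  calc exp (α * log (u / v))
      ≤ exp (α * log (1 + C)) * exp (α * max (log (1 / v)) 0) := by
        rw [← exp_add, ← mul_add]
        gcongr
        exact log_div_le_of_le_add hC hu hv huv
    _ ≤ (1 + C) ^ α * (1 + v ^ (-α)) := by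
        rw [mul_comm α, ← rpow_def_of_pos (by linarith)]
        gcongr

end Real

/-- Jensen's inequality; the `1 +` covers the junk value `∫ g = 0` when `g` is not integrable. -/
lemma ofReal_exp_integral_le_one_add {X : Type*} [MeasurableSpace X] (ν : Measure X)
    [IsFiniteMeasure ν] (g : X → ℝ) :
    ENNReal.ofReal (Real.exp (∫ x, g x ∂ν)) ≤
      1 + (ν Set.univ)⁻¹ * ∫⁻ x, ENNReal.ofReal (Real.exp ((ν Set.univ).toReal * g x)) ∂ν := by
  rcases eq_or_ne ν 0 with rfl | hν
  · simp
  have : NeZero ν := ⟨hν⟩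
  set t := (ν Set.univ).toReal with ht
  have ht0 : 0 < t := ENNReal.toReal_pos (by simpa using hν) (measure_ne_top ν _)
  by_cases hg : Integrable g ν
  swap
  · simp [integral_undef hg]
  have hexp_nonneg : 0 ≤ᵐ[ν] fun x ↦ Real.exp (t * g x) :=
    ae_of_all _ fun _ ↦ (Real.exp_pos _).le
  by_cases hexp : Integrable (fun x ↦ Real.exp (t * g x)) ν
  swap
  · have hmeas : AEStronglyMeasurable (fun x ↦ Real.exp (t * g x)) ν :=
      Real.continuous_exp.comp_aestronglyMeasurable (hg.aestronglyMeasurable.const_mul t)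
    have : ∫⁻ x, ENNReal.ofReal (Real.exp (t * g x)) ∂ν = ⊤ := by
      simpa [Integrable, hmeas, hasFiniteIntegral_iff_ofReal hexp_nonneg] using hexp
    simp [this, ENNReal.mul_top]
  have hJensen := convexOn_exp.map_average_le Real.continuous_exp.continuousOn isClosed_univ
    (ae_of_all _ fun x ↦ Set.mem_univ (t * g x)) (hg.const_mul t) hexp
  rw [average_eq, average_eq, integral_const_mul, smul_eq_mul, smul_eq_mul, measureReal_def,
    ← ht, inv_mul_cancel_left₀ ht0.ne'] at hJensen
  calc ENNReal.ofReal (Real.exp (∫ x, g x ∂ν))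
      ≤ ENNReal.ofReal (t⁻¹ * ∫ x, Real.exp (t * g x) ∂ν) := ENNReal.ofReal_le_ofReal hJensen
    _ = (ν Set.univ)⁻¹ * ∫⁻ x, ENNReal.ofReal (Real.exp (t * g x)) ∂ν := by
      rw [ENNReal.ofReal_mul (by positivity), ofReal_integral_eq_lintegral_ofReal hexp hexp_nonneg,
        ENNReal.ofReal_inv_of_pos ht0, ht, ENNReal.ofReal_toReal (measure_ne_top ν _)]
    _ ≤ _ := le_add_self

lemma ofReal_exp_mul_integral_sub_le {X : Type*} [MeasurableSpace X] (ν : Measure X)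
    [IsFiniteMeasure ν] (g : X → ℝ) {c a K : ℝ} (hc : 0 ≤ c) (ha : -a ≤ K) :
    ENNReal.ofReal (Real.exp (c * (∫ x, g x ∂ν - a))) ≤
      ENNReal.ofReal (Real.exp (c * K)) * (1 + (ν Set.univ)⁻¹ *
        ∫⁻ x, ENNReal.ofReal (Real.exp ((ν Set.univ).toReal * c * g x)) ∂ν) := by
  calc ENNReal.ofReal (Real.exp (c * (∫ x, g x ∂ν - a)))
      ≤ ENNReal.ofReal (Real.exp (c * K) * Real.exp (∫ x, c * g x ∂ν)) := by
        rw [← Real.exp_add, integral_const_mul]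
        gcongr
        nlinarith
    _ ≤ _ := by
        rw [ENNReal.ofReal_mul (Real.exp_pos _).le]
        simpa only [mul_assoc] using
          mul_le_mul_right (ofReal_exp_integral_le_one_add ν fun x ↦ c * g x) _

lemma setLIntegral_one_add_inv_mul_lintegral_lt_top {X Y : Type*} [MeasurableSpace X]
    [MeasurableSpace Y] {μ : Measure X} [SFinite μ] {ν : Measure Y} [IsFiniteMeasure ν]
    {F : X → Y → ℝ≥0∞} (hF : Measurable (Function.uncurry F)) {s : Set X} (hs : μ s < ⊤)
    {M : ℝ≥0∞} (hM : M < ⊤) (hFM : ∀ y, ∫⁻ x in s, F x y ∂μ ≤ M) :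
    ∫⁻ x in s, (1 + (ν Set.univ)⁻¹ * ∫⁻ y, F x y ∂ν) ∂μ < ⊤ := by
  calc ∫⁻ x in s, (1 + (ν Set.univ)⁻¹ * ∫⁻ y, F x y ∂ν) ∂μ
      = μ s + (ν Set.univ)⁻¹ * ∫⁻ y, ∫⁻ x in s, F x y ∂μ ∂ν := by
        rw [lintegral_add_left measurable_const, setLIntegral_one,
          lintegral_const_mul _ hF.lintegral_prod_right, lintegral_lintegral_swap hF.aemeasurable]
    _ ≤ μ s + (ν Set.univ)⁻¹ * (ν Set.univ * M) := by
        gcongr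
        simpa only [lintegral_const, mul_comm] using lintegral_mono hFM
    _ ≤ μ s + M := by
        gcongr
        rw [← mul_assoc]
        exact mul_le_of_le_one_left' (ENNReal.inv_mul_le_one _)
    _ < ⊤ := ENNReal.add_lt_top.2 ⟨hs, hM⟩

section Kernel

variable {E : Type*} [NormedAddCommGroup E] [MeasurableSpace E] [BorelSpace E]

/-- `L̃μ x = ∫ y, logKernel x₀ x y ∂μ`. -/
noncomputable def logKernel (x₀ x y : E) : ℝ := Real.log (‖x₀ - y‖ / ‖x - y‖)

lemma measurable_logKernel_uncurry [SecondCountableTopology E] (x₀ : E) :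
    Measurable (Function.uncurry (logKernel x₀)) :=
  Real.measurable_log.comp <| (continuous_const.sub continuous_snd).norm.measurable.div
    (continuous_fst.sub continuous_snd).norm.measurable

lemma neg_integral_logKernel_le {ν : Measure E} [IsFiniteMeasure ν] {x₀ x : E} {C : ℝ}
    (hC : 0 ≤ C) (hx : x ∈ closedBall x₀ C)
    (hν : ∫⁻ y, ENNReal.ofReal (max (Real.log (1 / ‖x₀ - y‖)) 0) ∂ν < ⊤) :
    -∫ y, logKernel x₀ x y ∂ν ≤
      ∫ y, (Real.log (1 + C) + max (Real.log (1 / ‖x₀ - y‖)) 0) ∂ν := by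
  have hlogC : 0 ≤ Real.log (1 + C) := Real.log_nonneg (by linarith)
  have hlogPos : Integrable (fun y ↦ max (Real.log (1 / ‖x₀ - y‖)) 0) ν :=
    ⟨(by fun_prop : Measurable fun y ↦ max (Real.log (1 / ‖x₀ - y‖)) 0).aestronglyMeasurable,
      (hasFiniteIntegral_iff_ofReal (ae_of_all _ fun _ ↦ le_max_right _ _)).2 hν⟩
  by_cases hg : Integrable (logKernel x₀ x) ν
  · rw [← integral_neg]
    refine integral_mono hg.neg ((integrable_const _).add hlogPos) fun y ↦ ?_
    have hxy : ‖x - y‖ ≤ ‖x₀ - y‖ + C := by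
      rw [mem_closedBall, dist_eq_norm] at hx
      linarith [norm_sub_le_norm_sub_add_norm_sub x x₀ y]
    simpa only [Pi.neg_apply, logKernel, ← Real.log_inv, inv_div]
      using Real.log_div_le_of_le_add hC (norm_nonneg _) (norm_nonneg _) hxy
  · rw [integral_undef hg, neg_zero]
    exact integral_nonneg fun y ↦ add_nonneg hlogC (le_max_right _ _)

lemma setLIntegral_norm_sub_rpow_neg_le (μ : Measure E) [μ.IsAddRightInvariant] {α : ℝ}
    (hα : 0 ≤ α) (s : Set E) (y : E) :
    ∫⁻ x in s, ENNReal.ofReal (‖x - y‖ ^ (-α)) ∂μ ≤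
      μ s + ∫⁻ x in ball 0 1, ENNReal.ofReal (‖x‖ ^ (-α)) ∂μ := by
  set f := (ball (0 : E) 1).indicator fun x ↦ ENNReal.ofReal (‖x‖ ^ (-α))
  have hsplit : ∀ x, ENNReal.ofReal (‖x - y‖ ^ (-α)) ≤ 1 + f (x - y) := by
    intro x
    by_cases hx : x - y ∈ ball 0 1
    · simp only [f, Set.indicator_of_mem hx, le_add_self]
    · rw [mem_ball_zero_iff, not_lt] at hx
      simp only [f, Set.indicator_of_notMem (mem_ball_zero_iff.not.2 hx.not_gt), add_zero]
      exact ENNReal.ofReal_le_one.2 (Real.rpow_le_one_of_one_le_of_nonpos hx (neg_nonpos.2 hα))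
  calc ∫⁻ x in s, ENNReal.ofReal (‖x - y‖ ^ (-α)) ∂μ
      ≤ ∫⁻ x in s, (1 + f (x - y)) ∂μ := lintegral_mono hsplit
    _ ≤ μ s + ∫⁻ x, f (x - y) ∂μ := by
      rw [lintegral_add_left measurable_const, setLIntegral_one]
      exact add_le_add_right (setLIntegral_le_lintegral _ _) _
    _ = μ s + ∫⁻ x in ball 0 1, ENNReal.ofReal (‖x‖ ^ (-α)) ∂μ := by
      rw [lintegral_sub_right_eq_self, lintegral_indicator measurableSet_ball]

lemma setLIntegral_exp_mul_logKernel_le (μ : Measure E) [μ.IsAddRightInvariant] {α C : ℝ}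
    (hα : 0 ≤ α) (hC : 0 ≤ C) {x₀ : E} {s : Set E} (hs : s ⊆ closedBall x₀ C) (y : E) :
    ∫⁻ x in s, ENNReal.ofReal (Real.exp (α * logKernel x₀ x y)) ∂μ ≤
      ENNReal.ofReal ((1 + C) ^ α) *
        (μ s + (μ s + ∫⁻ x in ball 0 1, ENNReal.ofReal (‖x‖ ^ (-α)) ∂μ)) := by
  calc ∫⁻ x in s, ENNReal.ofReal (Real.exp (α * logKernel x₀ x y)) ∂μ
      ≤ ∫⁻ x in s, ENNReal.ofReal ((1 + C) ^ α) * (1 + ENNReal.ofReal (‖x - y‖ ^ (-α))) ∂μ := by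
        refine setLIntegral_mono (by fun_prop) fun x hx ↦ ?_
        have hxy : ‖x₀ - y‖ ≤ ‖x - y‖ + C := by
          have := hs hx
          rw [mem_closedBall, dist_eq_norm] at this
          linarith [norm_sub_le_norm_sub_add_norm_sub x₀ x y, norm_sub_rev x₀ x]
        rw [← ENNReal.ofReal_one, ← ENNReal.ofReal_add zero_le_one (by positivity),
          ← ENNReal.ofReal_mul (by positivity)]
        exact ENNReal.ofReal_le_ofReal <|
          Real.exp_mul_log_div_le_of_le_add hC (norm_nonneg _) (norm_nonneg _) hxy hα
    _ ≤ ENNReal.ofReal ((1 + C) ^ α) *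
        (μ s + (μ s + ∫⁻ x in ball 0 1, ENNReal.ofReal (‖x‖ ^ (-α)) ∂μ)) := by
        rw [lintegral_const_mul' _ _ ENNReal.ofReal_ne_top, lintegral_add_left measurable_const,
          setLIntegral_one]
        gcongr
        exact setLIntegral_norm_sub_rpow_neg_le μ hα s y

end Kernel

lemma lintegral_ball_zero_one_norm_rpow_neg_lt_top {E : Type*} [NormedAddCommGroup E]
    [NormedSpace ℝ E] [FiniteDimensional ℝ E] [MeasurableSpace E] [BorelSpace E]
    (μ : Measure E) [μ.IsAddHaarMeasure] (hd : 1 ≤ Module.finrank ℝ E) {α : ℝ}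
    (hα : α < Module.finrank ℝ E) :
    ∫⁻ x in ball 0 1, ENNReal.ofReal (‖x‖ ^ (-α)) ∂μ < ⊤ := by
  have hint : IntegrableOn (fun x : E ↦ ‖x‖ ^ (-α)) (ball 0 1) μ :=
    integrableOn_ball_of_norm_le_rpow hd hα (C := 1)
      (ae_of_all _ fun x ↦ by simp [abs_of_nonneg (Real.rpow_nonneg (norm_nonneg x) _)])
      (by fun_prop : Measurable fun x : E ↦ ‖x‖ ^ (-α)).aestronglyMeasurable
  exact (hasFiniteIntegral_iff_ofReal (ae_of_all _ fun x ↦ Real.rpow_nonneg (norm_nonneg x) _)).1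
    hint.hasFiniteIntegral

/-- Let `μ = μp − μm` be a finite signed Radon measure on `ℝⁿ` with total variation
`‖μ‖ < 1`, and fix `x₀` with `∫ log⁺(1/|x₀−y|) d|μ|(y) < ∞`.  With
`L̃μ(x) = ∫ log(|x₀−y|/|x−y|) dμ(y)`, for every ball `B ⊆ ℝⁿ` one has
`∫_B e^{n L̃μ} < ∞`. -/
theorem stmt4 (n : ℕ) (hn : 1 ≤ n)
    (μp μm : Measure (EuclideanSpace ℝ (Fin n)))
    [IsFiniteMeasure μp] [IsFiniteMeasure μm]
    (hmass : μp Set.univ + μm Set.univ < 1)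
    (x₀ : EuclideanSpace ℝ (Fin n))
    (hx₀ : ∫⁻ y, ENNReal.ofReal (max (Real.log (1 / ‖x₀ - y‖)) 0) ∂(μp + μm) < ⊤)
    (L : EuclideanSpace ℝ (Fin n) → ℝ)
    (hL : ∀ x, L x = (∫ y, Real.log (‖x₀ - y‖ / ‖x - y‖) ∂μp)
        - ∫ y, Real.log (‖x₀ - y‖ / ‖x - y‖) ∂μm) :
    ∀ (z : EuclideanSpace ℝ (Fin n)) (r : ℝ),
      ∫⁻ x in Metric.ball z r, ENNReal.ofReal (Real.exp ((n : ℝ) * L x)) < ⊤ := by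
  intro z r
  set C := |r| + dist z x₀
  have hC : 0 ≤ C := by positivity
  have hball : ball z r ⊆ closedBall x₀ C :=
    ball_subset_closedBall.trans (closedBall_subset_closedBall' (add_le_add_left (le_abs_self r) _))
  have hμm : ∫⁻ y, ENNReal.ofReal (max (Real.log (1 / ‖x₀ - y‖)) 0) ∂μm < ⊤ :=
    (lintegral_mono' (Measure.le_add_left le_rfl) le_rfl).trans_lt hx₀
  set α := (μp Set.univ).toReal * n
  have hα : 0 ≤ α := by positivity
  have hαn : α < Module.finrank ℝ (EuclideanSpace ℝ (Fin n)) := by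
    have hμp : (μp Set.univ).toReal < 1 :=
      ENNReal.toReal_lt_of_lt_ofReal (by simpa using (le_self_add).trans_lt hmass)
    rw [finrank_euclideanSpace_fin]
    exact mul_lt_of_lt_one_left (by exact_mod_cast hn) hμp
  set K := ∫ y, (Real.log (1 + C) + max (Real.log (1 / ‖x₀ - y‖)) 0) ∂μm
  calc ∫⁻ x in ball z r, ENNReal.ofReal (Real.exp (n * L x))
      ≤ ∫⁻ x in ball z r, ENNReal.ofReal (Real.exp (n * K)) * (1 + (μp Set.univ)⁻¹ *
          ∫⁻ y, ENNReal.ofReal (Real.exp (α * logKernel x₀ x y)) ∂μp) :=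
        setLIntegral_mono' measurableSet_ball fun x hx ↦ by
          rw [hL x]
          exact ofReal_exp_mul_integral_sub_le μp _ (Nat.cast_nonneg n)
            (neg_integral_logKernel_le hC (hball hx) hμm)
    _ = ENNReal.ofReal (Real.exp (n * K)) * ∫⁻ x in ball z r, (1 + (μp Set.univ)⁻¹ *
          ∫⁻ y, ENNReal.ofReal (Real.exp (α * logKernel x₀ x y)) ∂μp) :=
        lintegral_const_mul' _ _ ENNReal.ofReal_ne_top
    _ < ⊤ := by
        have hJ := lintegral_ball_zero_one_norm_rpow_neg_lt_top volume
          (by rwa [finrank_euclideanSpace_fin]) hαn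
        have hB : volume (ball z r) < ⊤ := measure_ball_lt_top
        have hF := (measurable_logKernel_uncurry x₀).const_mul α |>.exp.ennreal_ofReal
        exact ENNReal.mul_lt_top ENNReal.ofReal_lt_top <|
          setLIntegral_one_add_inv_mul_lintegral_lt_top hF hB (by finiteness)
            (setLIntegral_exp_mul_logKernel_le volume hα hC hball)
end

section
/- Let μ be a finite signed Radon measure on ℝⁿ with ‖μ‖ < 1 and ∫ log⁺(1/|x₀−y|) d|μ|(y) < ∞ for a fixed x₀. Set μ_k = μ restricted to B(0,k) and L̃ν(x) = ∫ log(|x₀−y|/|x−y|) dν(y). Then for every ball B, ∫_B |e^{n·L̃μ_k(x)} − e^{n·L̃μ(x)}| dx → 0 as k → ∞. -/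
/-!
For `x ∈ B(z, r)` the kernel obeys
`log (|x₀ - y| / |x - y|) ≤ log (1 + |x₀ - x|) + log⁺ (1 / |x - y|)`,
and the same with `x` and `x₀` exchanged. Hence `L̃μ_k(x)` and `L̃μ(x)` are bounded above,
uniformly in `k`, by `c + ∫ log⁺ (1 / |x - y|) dμ₊(y)`. Jensen's inequality for the probability
measure `μ₊ / m`, `m = μ₊(ℝⁿ) < 1`, bounds `exp (n ∫ log⁺ (1 / |x - y|) dμ₊)` by
`1 + m⁻¹ ∫ |x - y|^(-n m) dμ₊(y)`, which is integrable over `B` because `n m < n`. By Tonelli,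
`log⁺ (1 / |x - ·|)` is `|μ|`-integrable for almost every `x ∈ B`; there `L̃μ_k(x) → L̃μ(x)`,
and dominated convergence concludes.
-/

open Metric MeasureTheory Filter Real Set Module Topology

lemma log_div_le_log_one_add_add_posLog {a b d : ℝ} (ha : 0 ≤ a) (hb : 0 ≤ b) (hd : 0 ≤ d)
    (h : a ≤ b + d) : log (a / b) ≤ log (1 + d) + log⁺ b⁻¹ := by
  rcases ha.eq_or_lt with rfl | ha
  · simpa only [zero_div, log_zero] using add_nonneg (log_nonneg (by linarith)) posLog_nonneg
  rcases hb.eq_or_lt with rfl | hb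
  · simpa only [div_zero, log_zero] using add_nonneg (log_nonneg (by linarith)) posLog_nonneg
  rw [posLog_eq_log_max_one (by positivity), ← log_mul (by positivity) (by positivity)]
  refine log_le_log (by positivity) ?_
  have hmax : (1 + d) * max 1 b⁻¹ * b = (1 + d) * max b 1 := by
    rw [mul_assoc, max_mul_of_nonneg _ _ hb.le, one_mul, inv_mul_cancel₀ hb.ne']
  rw [div_le_iff₀ hb, hmax]
  nlinarith [le_max_left b 1, le_max_right b 1]

lemma exp_mul_posLog_inv_le {s t : ℝ} (hs : 0 ≤ s) (ht : 0 ≤ t) :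
    exp (s * log⁺ t⁻¹) ≤ 1 + t ^ (-s) := by
  rcases ht.eq_or_lt with rfl | ht
  · simp only [inv_zero, posLog_zero, mul_zero, exp_zero, le_add_iff_nonneg_right]
    positivity
  have hexp : exp (s * log⁺ t⁻¹) = max 1 (t ^ (-s)) := by
    rw [posLog_apply, mul_max_of_nonneg _ _ hs, Monotone.map_max exp_monotone, mul_zero, exp_zero,
      rpow_def_of_pos ht, log_inv, mul_neg, mul_neg, mul_comm]
  rw [hexp]
  exact max_le (le_add_of_nonneg_right (by positivity)) (le_add_of_nonneg_left zero_le_one)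

lemma posLog_inv_le_rpow_neg_div {σ t : ℝ} (hσ : 0 < σ) (ht : 0 ≤ t) :
    log⁺ t⁻¹ ≤ t ^ (-σ) / σ := by
  rw [posLog_apply, rpow_neg ht, ← inv_rpow ht]
  exact max_le (by positivity) (log_le_rpow_div (inv_nonneg.2 ht) hσ)

@[fun_prop]
lemma Real.measurable_posLog : Measurable log⁺ := continuous_posLog.measurable

lemma ofReal_exp_integral_le {α : Type*} [MeasurableSpace α] (μ : Measure α) [IsFiniteMeasure μ]
    [NeZero μ] {f : α → ℝ} (hf : AEStronglyMeasurable f μ) (hf0 : 0 ≤ᵐ[μ] f) :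
    ENNReal.ofReal (exp (∫ x, f x ∂μ)) ≤
      (μ univ)⁻¹ * ∫⁻ x, ENNReal.ofReal (exp (μ.real univ * f x)) ∂μ := by
  set m := μ univ
  rw [show μ.real univ = m.toReal from rfl]
  have hm0 : m ≠ 0 := NeZero.ne _
  have hmtop : m ≠ ⊤ := measure_ne_top μ univ
  have hexp_meas : AEStronglyMeasurable (fun x => exp (m.toReal * f x)) μ :=
    continuous_exp.comp_aestronglyMeasurable (hf.const_mul _)
  by_cases hfi : Integrable f μ
  swap
  · calc ENNReal.ofReal (exp (∫ x, f x ∂μ)) = m⁻¹ * ∫⁻ _, 1 ∂μ := by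
          rw [integral_undef hfi, exp_zero, ENNReal.ofReal_one, lintegral_const, one_mul,
            ENNReal.inv_mul_cancel hm0 hmtop]
      _ ≤ _ := by
          refine mul_le_mul_right (lintegral_mono_ae (hf0.mono fun x hx => ?_)) _
          rw [← ENNReal.ofReal_one]
          exact ENNReal.ofReal_le_ofReal (one_le_exp (mul_nonneg ENNReal.toReal_nonneg hx))
  by_cases hei : Integrable (fun x => exp (m.toReal * f x)) μ
  swap
  · rw [not_not.1 ((lintegral_ofReal_ne_top_iff_integrable hexp_meas
      (ae_of_all _ fun _ => (exp_pos _).le)).not.2 hei), ENNReal.mul_top (by simpa using hmtop)]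
    exact le_top
  have hm : m⁻¹.toReal * m.toReal = 1 := by
    rw [ENNReal.toReal_inv, inv_mul_cancel₀ (ENNReal.toReal_ne_zero.2 ⟨hm0, hmtop⟩)]
  have hjensen := convexOn_exp.map_integral_le (μ := m⁻¹ • μ) continuous_exp.continuousOn
    isClosed_univ (ae_of_all _ fun _ => mem_univ _) ((hfi.const_mul m.toReal).smul_measure
      (ENNReal.inv_ne_top.2 hm0)) (hei.smul_measure (ENNReal.inv_ne_top.2 hm0))
  rw [integral_smul_measure, integral_const_mul, smul_eq_mul, ← mul_assoc, hm, one_mul,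
    integral_smul_measure, smul_eq_mul] at hjensen
  calc ENNReal.ofReal (exp (∫ x, f x ∂μ))
      ≤ ENNReal.ofReal (m⁻¹.toReal * ∫ x, exp (m.toReal * f x) ∂μ) :=
        ENNReal.ofReal_le_ofReal hjensen
    _ = _ := by
        rw [ENNReal.ofReal_mul ENNReal.toReal_nonneg, ENNReal.ofReal_toReal (by simpa using hm0),
          ofReal_integral_eq_lintegral_ofReal hei (ae_of_all _ fun _ => (exp_pos _).le)]

lemma tendsto_setIntegral_ball_nat {α G : Type*} [PseudoMetricSpace α] [MeasurableSpace α]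
    [OpensMeasurableSpace α] [NormedAddCommGroup G] [NormedSpace ℝ G] {ν : Measure α}
    {f : α → G} (hf : Integrable f ν) (a : α) :
    Tendsto (fun k : ℕ => ∫ y in ball a k, f y ∂ν) atTop (𝓝 (∫ y, f y ∂ν)) := by
  have h := tendsto_setIntegral_of_monotone (μ := ν) (s := fun k : ℕ => ball a (k : ℝ))
    (fun _ => measurableSet_ball) (fun _ _ hij => ball_subset_ball (by exact_mod_cast hij))
    (by rw [iUnion_ball_nat]; exact hf.integrableOn)
  rwa [iUnion_ball_nat, setIntegral_univ] at h

lemma lintegral_ball_rpow_neg_norm_sub_le {E : Type*} [NormedAddCommGroup E] [MeasurableSpace E]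
    [BorelSpace E] (μ : Measure E) [μ.IsAddRightInvariant] {s : ℝ} (hs : 0 ≤ s) (z y : E)
    (r : ℝ) :
    ∫⁻ x in ball z r, ENNReal.ofReal (‖x - y‖ ^ (-s)) ∂μ ≤
      μ (ball z r) + ∫⁻ x in ball 0 1, ENNReal.ofReal (‖x‖ ^ (-s)) ∂μ := by
  set g : E → ENNReal := (ball 0 1).indicator fun x => ENNReal.ofReal (‖x‖ ^ (-s))
  have hle : ∀ w : E, ENNReal.ofReal (‖w‖ ^ (-s)) ≤ 1 + g w := by
    intro w
    by_cases hw : w ∈ ball (0 : E) 1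
    · simp only [g, indicator_of_mem hw, le_add_self]
    · rw [mem_ball_zero_iff, not_lt] at hw
      rw [← ENNReal.ofReal_one]
      exact (ENNReal.ofReal_le_ofReal (rpow_le_one_of_one_le_of_nonpos hw (by linarith))).trans
        le_self_add
  calc ∫⁻ x in ball z r, ENNReal.ofReal (‖x - y‖ ^ (-s)) ∂μ
      ≤ ∫⁻ x in ball z r, (1 + g (x - y)) ∂μ := lintegral_mono fun x => hle (x - y)
    _ = μ (ball z r) + ∫⁻ x in ball z r, g (x - y) ∂μ := by
        rw [lintegral_add_left measurable_const, setLIntegral_const, one_mul]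
    _ ≤ μ (ball z r) + ∫⁻ x, g (x - y) ∂μ := add_le_add_right (setLIntegral_le_lintegral _ _) _
    _ = μ (ball z r) + ∫⁻ x in ball 0 1, ENNReal.ofReal (‖x‖ ^ (-s)) ∂μ := by
        rw [lintegral_sub_right_eq_self g y, lintegral_indicator measurableSet_ball]

section LogPotential

lemma log_norm_sub_div_norm_sub_le {E : Type*} [NormedAddCommGroup E] (x₀ x y : E) :
    log (‖x₀ - y‖ / ‖x - y‖) ≤ log (1 + ‖x₀ - x‖) + log⁺ ‖x - y‖⁻¹ :=
  log_div_le_log_one_add_add_posLog (norm_nonneg _) (norm_nonneg _) (norm_nonneg _)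
    ((norm_sub_le_norm_sub_add_norm_sub x₀ x y).trans_eq (add_comm _ _))

variable {E : Type*} [NormedAddCommGroup E] [MeasurableSpace E]

/-- The paper's `L̃ν`. -/
noncomputable def logPotential (x₀ : E) (ν : Measure E) (x : E) : ℝ :=
  ∫ y, log (‖x₀ - y‖ / ‖x - y‖) ∂ν

lemma logPotential_swap (x₀ x : E) (ν : Measure E) :
    logPotential x ν x₀ = -logPotential x₀ ν x := by
  rw [logPotential, logPotential, ← integral_neg]
  simp only [← log_inv, inv_div]

lemma logPotential_le_of_le {ν ν' : Measure E} [IsFiniteMeasure ν] (hν : ν' ≤ ν) {x₀ x : E}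
    {R : ℝ} (hR : ‖x₀ - x‖ ≤ R) (hx : Integrable (fun y => log⁺ ‖x - y‖⁻¹) ν) :
    logPotential x₀ ν' x ≤ log (1 + R) * ν.real univ + ∫ y, log⁺ ‖x - y‖⁻¹ ∂ν := by
  have : IsFiniteMeasure ν' := isFiniteMeasure_of_le ν hν
  have hR₀ : 0 ≤ log (1 + R) := log_nonneg (by linarith [norm_nonneg (x₀ - x)])
  have hbound : Integrable (fun y => log (1 + R) + log⁺ ‖x - y‖⁻¹) ν :=
    (integrable_const _).add hx
  have hbound_nonneg : 0 ≤ᵐ[ν] fun y => log (1 + R) + log⁺ ‖x - y‖⁻¹ :=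
    ae_of_all _ fun y => add_nonneg hR₀ posLog_nonneg
  calc logPotential x₀ ν' x ≤ ∫ y, (log (1 + R) + log⁺ ‖x - y‖⁻¹) ∂ν' := by
        by_cases hK : Integrable (fun y => log (‖x₀ - y‖ / ‖x - y‖)) ν'
        · refine integral_mono hK (hbound.mono_measure hν) fun y => ?_
          exact (log_norm_sub_div_norm_sub_le x₀ x y).trans (by gcongr)
        · exact (integral_undef hK).trans_le (integral_nonneg_of_ae (hbound_nonneg.filter_mono
            (ae_mono hν)))
    _ ≤ ∫ y, (log (1 + R) + log⁺ ‖x - y‖⁻¹) ∂ν := integral_mono_measure hν hbound_nonneg hbound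
    _ = log (1 + R) * ν.real univ + ∫ y, log⁺ ‖x - y‖⁻¹ ∂ν := by
        rw [integral_add (integrable_const _) hx, integral_const, smul_eq_mul, mul_comm]

lemma logPotential_sub_logPotential_le {μp μm μp' μm' : Measure E} [IsFiniteMeasure μp]
    [IsFiniteMeasure μm] (hp : μp' ≤ μp) (hm : μm' ≤ μm) {x₀ x : E} {R : ℝ} (hR : ‖x₀ - x‖ ≤ R)
    (hx : Integrable (fun y => log⁺ ‖x - y‖⁻¹) μp)
    (hx₀ : Integrable (fun y => log⁺ ‖x₀ - y‖⁻¹) μm) :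
    logPotential x₀ μp' x - logPotential x₀ μm' x ≤
      log (1 + R) * (μp.real univ + μm.real univ) + ∫ y, log⁺ ‖x₀ - y‖⁻¹ ∂μm +
        ∫ y, log⁺ ‖x - y‖⁻¹ ∂μp := by
  have hplus := logPotential_le_of_le hp hR hx
  have hminus := logPotential_le_of_le hm (x₀ := x) ((norm_sub_rev x x₀).trans_le hR) hx₀
  rw [logPotential_swap] at hminus
  linarith [mul_add (log (1 + R)) (μp.real univ) (μm.real univ)]

variable [BorelSpace E]

lemma integrable_log_norm_sub_div_norm_sub {ν : Measure E} [IsFiniteMeasure ν] {x₀ x : E}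
    (hx : Integrable (fun y => log⁺ ‖x - y‖⁻¹) ν)
    (hx₀ : Integrable (fun y => log⁺ ‖x₀ - y‖⁻¹) ν) :
    Integrable (fun y => log (‖x₀ - y‖ / ‖x - y‖)) ν := by
  refine (((integrable_const (log (1 + ‖x₀ - x‖))).add hx).add hx₀).mono'
    (by fun_prop : Measurable fun y => log (‖x₀ - y‖ / ‖x - y‖)).aestronglyMeasurable
    (ae_of_all _ fun y => ?_)
  have hupper := log_norm_sub_div_norm_sub_le x₀ x y
  have hlower := log_norm_sub_div_norm_sub_le x x₀ y
  rw [← inv_div, log_inv, norm_sub_rev x x₀] at hlower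
  rw [norm_eq_abs, abs_le, Pi.add_apply, Pi.add_apply]
  constructor <;> linarith [posLog_nonneg (x := ‖x - y‖⁻¹), posLog_nonneg (x := ‖x₀ - y‖⁻¹)]

lemma ofReal_exp_mul_integral_posLog_inv_le (ν : Measure E) [IsFiniteMeasure ν] [NeZero ν]
    {a : ℝ} (ha : 0 ≤ a) (x : E) :
    ENNReal.ofReal (exp (a * ∫ y, log⁺ ‖x - y‖⁻¹ ∂ν)) ≤
      1 + (ν univ)⁻¹ * ∫⁻ y, ENNReal.ofReal (‖x - y‖ ^ (-(a * ν.real univ))) ∂ν := by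
  rw [← integral_const_mul]
  refine (ofReal_exp_integral_le ν
    (by fun_prop : Measurable fun y => a * log⁺ ‖x - y‖⁻¹).aestronglyMeasurable
    (ae_of_all _ fun y => mul_nonneg ha posLog_nonneg)).trans ?_
  calc (ν univ)⁻¹ * ∫⁻ y, ENNReal.ofReal (exp (ν.real univ * (a * log⁺ ‖x - y‖⁻¹))) ∂ν
      ≤ (ν univ)⁻¹ * ∫⁻ y, (1 + ENNReal.ofReal (‖x - y‖ ^ (-(a * ν.real univ)))) ∂ν := by
        gcongr with y
        rw [← ENNReal.ofReal_one, ← ENNReal.ofReal_add zero_le_one (by positivity), ← mul_assoc,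
          mul_comm _ a]
        exact ENNReal.ofReal_le_ofReal (exp_mul_posLog_inv_le (by positivity) (norm_nonneg _))
    _ = 1 + (ν univ)⁻¹ * ∫⁻ y, ENNReal.ofReal (‖x - y‖ ^ (-(a * ν.real univ))) ∂ν := by
        rw [lintegral_add_left measurable_const, lintegral_const, one_mul, mul_add,
          ENNReal.inv_mul_cancel (NeZero.ne _) (measure_ne_top _ _)]

@[fun_prop]
lemma measurable_logPotential [SecondCountableTopology E] (x₀ : E) (ν : Measure E) [SFinite ν] :
    Measurable (logPotential x₀ ν) :=
  (StronglyMeasurable.integral_prod_right' (f := fun p : E × E => log (‖x₀ - p.2‖ / ‖p.1 - p.2‖))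
    (by fun_prop : Measurable _).stronglyMeasurable).measurable

end LogPotential

section Haar

variable {E : Type*} [NormedAddCommGroup E] [NormedSpace ℝ E] [FiniteDimensional ℝ E]
  [MeasurableSpace E] [BorelSpace E] (μ : Measure E) [μ.IsAddHaarMeasure]

lemma lintegral_ball_zero_rpow_neg_norm_lt_top (hd : 1 ≤ finrank ℝ E) {s : ℝ}
    (hs : s < finrank ℝ E) : ∫⁻ x in ball 0 1, ENNReal.ofReal (‖x‖ ^ (-s)) ∂μ < ⊤ :=
  (integrableOn_ball_of_norm_le_rpow (μ := μ) (C := 1) hd hs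
    (ae_of_all _ fun x => by rw [one_mul, norm_of_nonneg (by positivity)])
    (by fun_prop : Measurable fun x : E => ‖x‖ ^ (-s)).aestronglyMeasurable).lintegral_lt_top

lemma lintegral_ball_lintegral_rpow_neg_norm_sub_lt_top (hd : 1 ≤ finrank ℝ E) {s : ℝ}
    (hs₀ : 0 ≤ s) (hs : s < finrank ℝ E) (ν : Measure E) [IsFiniteMeasure ν] (z : E) (r : ℝ) :
    ∫⁻ x in ball z r, ∫⁻ y, ENNReal.ofReal (‖x - y‖ ^ (-s)) ∂ν ∂μ < ⊤ := by
  set C := μ (ball z r) + ∫⁻ x in ball 0 1, ENNReal.ofReal (‖x‖ ^ (-s)) ∂μ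
  have hC : C < ⊤ := ENNReal.add_lt_top.2
    ⟨measure_ball_lt_top, lintegral_ball_zero_rpow_neg_norm_lt_top μ hd hs⟩
  rw [lintegral_lintegral_swap (by fun_prop)]
  calc ∫⁻ y, ∫⁻ x in ball z r, ENNReal.ofReal (‖x - y‖ ^ (-s)) ∂μ ∂ν ≤ ∫⁻ _, C ∂ν :=
        lintegral_mono fun y => lintegral_ball_rpow_neg_norm_sub_le μ hs₀ z y r
    _ < ⊤ := by
        rw [lintegral_const]
        exact ENNReal.mul_lt_top hC (measure_lt_top ν univ)

lemma ae_integrable_posLog_inv_norm_sub (hd : 1 ≤ finrank ℝ E) (ν : Measure E) [IsFiniteMeasure ν]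
    (z : E) (r : ℝ) : ∀ᵐ x ∂μ.restrict (ball z r), Integrable (fun y => log⁺ ‖x - y‖⁻¹) ν := by
  have hσ : (2⁻¹ : ℝ) < finrank ℝ E := by
    have : (1 : ℝ) ≤ finrank ℝ E := by exact_mod_cast hd
    linarith
  have hfin := lintegral_ball_lintegral_rpow_neg_norm_sub_lt_top μ hd (by norm_num) hσ ν z r
  have hmeas : Measurable fun x => ∫⁻ y, ENNReal.ofReal (‖x - y‖ ^ (-2⁻¹ : ℝ)) ∂ν :=
    Measurable.lintegral_prod_right'
      (f := fun p : E × E => ENNReal.ofReal (‖p.1 - p.2‖ ^ (-2⁻¹ : ℝ))) (by fun_prop)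
  filter_upwards [ae_lt_top hmeas hfin.ne] with x hx
  refine (lintegral_ofReal_ne_top_iff_integrable
    (by fun_prop : Measurable fun y => log⁺ ‖x - y‖⁻¹).aestronglyMeasurable
    (ae_of_all _ fun _ => posLog_nonneg)).1
    (ne_top_of_le_ne_top (ENNReal.mul_ne_top (ENNReal.ofReal_ne_top (r := 2)) hx.ne) ?_)
  rw [← lintegral_const_mul' _ _ ENNReal.ofReal_ne_top]
  refine lintegral_mono fun y => ?_
  rw [← ENNReal.ofReal_mul zero_le_two]
  refine ENNReal.ofReal_le_ofReal
    ((posLog_inv_le_rpow_neg_div (σ := 2⁻¹) (by norm_num) (norm_nonneg _)).trans_eq ?_)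
  rw [div_inv_eq_mul, mul_comm]

lemma integrableOn_ball_exp_mul_integral_posLog_inv (hd : 1 ≤ finrank ℝ E) (ν : Measure E)
    [IsFiniteMeasure ν] {a : ℝ} (ha : 0 ≤ a) (has : a * ν.real univ < finrank ℝ E) (z : E)
    (r : ℝ) : IntegrableOn (fun x => exp (a * ∫ y, log⁺ ‖x - y‖⁻¹ ∂ν)) (ball z r) μ := by
  have hmeas : Measurable fun x => ∫ y, log⁺ ‖x - y‖⁻¹ ∂ν :=
    (StronglyMeasurable.integral_prod_right' (f := fun p : E × E => log⁺ ‖p.1 - p.2‖⁻¹)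
      (by fun_prop : Measurable _).stronglyMeasurable).measurable
  refine (lintegral_ofReal_ne_top_iff_integrable
    (by fun_prop : Measurable fun x => exp (a * ∫ y, log⁺ ‖x - y‖⁻¹ ∂ν)).aestronglyMeasurable
    (ae_of_all _ fun _ => (exp_pos _).le)).1 ?_
  rcases eq_zero_or_neZero ν with rfl | hν
  · simpa using (measure_ball_lt_top (μ := μ)).ne
  have hinv : (ν univ)⁻¹ ≠ ⊤ := ENNReal.inv_ne_top.2 (NeZero.ne _)
  refine ne_top_of_le_ne_top (ENNReal.add_ne_top.2
    ⟨(measure_ball_lt_top (μ := μ) (x := z) (r := r)).ne, ENNReal.mul_ne_top hinv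
      (lintegral_ball_lintegral_rpow_neg_norm_sub_lt_top μ hd (by positivity) has ν z r).ne⟩) ?_
  calc ∫⁻ x in ball z r, ENNReal.ofReal (exp (a * ∫ y, log⁺ ‖x - y‖⁻¹ ∂ν)) ∂μ
      ≤ ∫⁻ x in ball z r,
          (1 + (ν univ)⁻¹ * ∫⁻ y, ENNReal.ofReal (‖x - y‖ ^ (-(a * ν.real univ))) ∂ν) ∂μ :=
        lintegral_mono fun x => ofReal_exp_mul_integral_posLog_inv_le ν ha x
    _ = μ (ball z r) + (ν univ)⁻¹ *
          ∫⁻ x in ball z r, ∫⁻ y, ENNReal.ofReal (‖x - y‖ ^ (-(a * ν.real univ))) ∂ν ∂μ := by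
        rw [lintegral_add_left measurable_const, setLIntegral_const, one_mul,
          lintegral_const_mul' _ _ hinv]

lemma ae_tendsto_logPotential_restrict_ball (hd : 1 ≤ finrank ℝ E) {ν : Measure E}
    [IsFiniteMeasure ν] {x₀ : E} (hx₀ : Integrable (fun y => log⁺ ‖x₀ - y‖⁻¹) ν) (z : E) (r : ℝ) :
    ∀ᵐ x ∂μ.restrict (ball z r), Tendsto (fun k : ℕ => logPotential x₀ (ν.restrict (ball 0 k)) x)
      atTop (𝓝 (logPotential x₀ ν x)) := by
  filter_upwards [ae_integrable_posLog_inv_norm_sub μ hd ν z r] with x hx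
  exact tendsto_setIntegral_ball_nat (integrable_log_norm_sub_div_norm_sub hx hx₀) 0

lemma ae_logPotential_sub_logPotential_le (hd : 1 ≤ finrank ℝ E) {μp μm : Measure E}
    [IsFiniteMeasure μp] [IsFiniteMeasure μm] {x₀ : E}
    (hx₀ : Integrable (fun y => log⁺ ‖x₀ - y‖⁻¹) μm) (z : E) (r : ℝ) :
    ∀ᵐ x ∂μ.restrict (ball z r), ∀ μp' ≤ μp, ∀ μm' ≤ μm,
      logPotential x₀ μp' x - logPotential x₀ μm' x ≤
        log (1 + (‖x₀ - z‖ + r)) * (μp.real univ + μm.real univ) + ∫ y, log⁺ ‖x₀ - y‖⁻¹ ∂μm +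
          ∫ y, log⁺ ‖x - y‖⁻¹ ∂μp := by
  filter_upwards [ae_integrable_posLog_inv_norm_sub μ hd μp z r,
    ae_restrict_mem measurableSet_ball] with x hx hxB μp' hp μm' hm
  refine logPotential_sub_logPotential_le hp hm ?_ hx hx₀
  have hxz : ‖z - x‖ < r := by rw [← dist_eq_norm, dist_comm]; exact mem_ball.1 hxB
  linarith [norm_sub_le_norm_sub_add_norm_sub x₀ z x]

end Haar

/-- With `μ` a finite signed measure of total variation `< 1`, `μ_k = μ|_{B(0,k)}`
and `L̃ν(x) = ∫ log(|x₀−y|/|x−y|) dν(y)`, for every ball `B` one has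
`∫_B |e^{n L̃μ_k} − e^{n L̃μ}| → 0` as `k → ∞`. -/
theorem stmt5 (n : ℕ) (hn : 1 ≤ n)
    (μp μm : Measure (EuclideanSpace ℝ (Fin n)))
    [IsFiniteMeasure μp] [IsFiniteMeasure μm]
    (hmass : μp Set.univ + μm Set.univ < 1)
    (x₀ : EuclideanSpace ℝ (Fin n))
    (hx₀ : ∫⁻ y, ENNReal.ofReal (max (Real.log (1 / ‖x₀ - y‖)) 0) ∂(μp + μm) < ⊤)
    (L : EuclideanSpace ℝ (Fin n) → ℝ)
    (hL : ∀ x, L x = (∫ y, Real.log (‖x₀ - y‖ / ‖x - y‖) ∂μp)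
        - ∫ y, Real.log (‖x₀ - y‖ / ‖x - y‖) ∂μm)
    (Lk : ℕ → EuclideanSpace ℝ (Fin n) → ℝ)
    (hLk : ∀ k x, Lk k x =
        (∫ y, Real.log (‖x₀ - y‖ / ‖x - y‖) ∂(μp.restrict (Metric.ball 0 (k : ℝ))))
        - ∫ y, Real.log (‖x₀ - y‖ / ‖x - y‖) ∂(μm.restrict (Metric.ball 0 (k : ℝ)))) :
    ∀ (z : EuclideanSpace ℝ (Fin n)) (r : ℝ),
      Tendsto (fun k : ℕ => ∫ x in Metric.ball z r,
          |Real.exp ((n : ℝ) * Lk k x) - Real.exp ((n : ℝ) * L x)|)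
        atTop (nhds 0) := by
  intro z r
  obtain rfl : L = fun x => logPotential x₀ μp x - logPotential x₀ μm x := funext hL
  obtain rfl : Lk = fun (k : ℕ) x => logPotential x₀ (μp.restrict (ball 0 (k : ℝ))) x -
      logPotential x₀ (μm.restrict (ball 0 (k : ℝ))) x := funext₂ hLk
  have hd : 1 ≤ finrank ℝ (EuclideanSpace ℝ (Fin n)) := by simpa using hn
  have hnm : (n : ℝ) * μp.real univ < finrank ℝ (EuclideanSpace ℝ (Fin n)) := by
    have : μp.real univ < 1 :=
      ENNReal.toReal_lt_of_lt_ofReal (by simpa using le_self_add.trans_lt hmass)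
    simpa using mul_lt_of_lt_one_right (by exact_mod_cast hn) this
  obtain ⟨hx₀p, hx₀m⟩ : Integrable (fun y => log⁺ ‖x₀ - y‖⁻¹) μp ∧
      Integrable (fun y => log⁺ ‖x₀ - y‖⁻¹) μm := by
    rw [← integrable_add_measure, ← lintegral_ofReal_ne_top_iff_integrable
      (by fun_prop : Measurable fun y => log⁺ ‖x₀ - y‖⁻¹).aestronglyMeasurable
      (ae_of_all _ fun _ => posLog_nonneg)]
    simpa only [one_div, max_comm, ← posLog_apply] using hx₀.ne
  set c := log (1 + (‖x₀ - z‖ + r)) * (μp.real univ + μm.real univ) +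
    ∫ y, log⁺ ‖x₀ - y‖⁻¹ ∂μm
  have hbound := ae_logPotential_sub_logPotential_le volume hd (μp := μp) hx₀m z r
  have hint := integrableOn_ball_exp_mul_integral_posLog_inv volume hd μp (by positivity) hnm z r
  suffices h : Tendsto _ atTop (𝓝 (∫ _ in ball z r, (0 : ℝ))) by simpa using h
  refine tendsto_integral_of_dominated_convergence
    (fun x => exp (n * c) * exp (n * ∫ y, log⁺ ‖x - y‖⁻¹ ∂μp)) (fun _ => by fun_prop)
    (hint.const_mul _) (fun k => ?_) ?_
  · filter_upwards [hbound] with x hx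
    rw [norm_eq_abs, abs_abs, ← exp_add, ← mul_add]
    exact abs_sub_le_of_nonneg_of_le (exp_pos _).le
      (exp_le_exp.2 (by gcongr; exact hx _ Measure.restrict_le_self _ Measure.restrict_le_self))
      (exp_pos _).le (exp_le_exp.2 (by gcongr; exact hx _ le_rfl _ le_rfl))
  · filter_upwards [ae_tendsto_logPotential_restrict_ball volume hd hx₀p z r,
      ae_tendsto_logPotential_restrict_ball volume hd hx₀m z r] with x hp hm
    simpa using (((hp.sub hm).const_mul (n : ℝ)).rexp.sub_const
      (exp (n * (logPotential x₀ μp x - logPotential x₀ μm x)))).abs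
end

section
/- For 0 ≤ α < 1 and n ≥ 1, the function ω(x) = |x|^{−nα} on ℝⁿ is an A₁ weight: there is a constant C = C(n,α) such that for every x ∈ ℝⁿ and r > 0, (1/|B(x,r)|) ∫_{B(x,r)} |y|^{−nα} dy ≤ C |x|^{−nα}. -/
/-!
By homogeneity, the average of `‖y‖ ^ (-s)` over `ball 0 R` is `K * R ^ (-s)`, where `K` is finite
because `‖y‖ ^ (-s)` is locally integrable for `s < d = dim E`. If `2 r ≤ ‖x‖`, the weight is at most
`2 ^ s * ‖x‖ ^ (-s)` on all of `ball x r`. Otherwise `ball x r ⊆ ball 0 (3 r)`, whose average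
`K * (3 r) ^ (-s) ≤ K * ‖x‖ ^ (-s)` costs only the doubling factor `3 ^ d`.
-/

open Metric MeasureTheory Module
open scoped Pointwise

theorem rpow_neg_norm_le_of_mem_ball {E : Type*} [SeminormedAddCommGroup E] {x y : E}
    {r s : ℝ} (hs : 0 ≤ s) (hxr : 2 * r ≤ ‖x‖) (hy : y ∈ ball x r) :
    ‖y‖ ^ (-s) ≤ 2 ^ s * ‖x‖ ^ (-s) := by
  have hr : 0 < r := pos_of_mem_ball hy
  have hxy : ‖x‖ / 2 ≤ ‖y‖ := by
    rw [mem_ball, dist_eq_norm, norm_sub_rev] at hy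
    linarith [norm_sub_norm_le x y]
  calc ‖y‖ ^ (-s) ≤ (‖x‖ / 2) ^ (-s) :=
        Real.rpow_le_rpow_of_nonpos (by linarith) hxy (neg_nonpos.2 hs)
    _ = 2 ^ s * ‖x‖ ^ (-s) := by
        rw [Real.div_rpow (norm_nonneg x) zero_le_two, Real.rpow_neg zero_le_two, div_inv_eq_mul,
          mul_comm]

section AddHaar

variable {E : Type*} [NormedAddCommGroup E] [NormedSpace ℝ E] [MeasurableSpace E] [BorelSpace E]
  [FiniteDimensional ℝ E] (μ : Measure E) [μ.IsAddHaarMeasure]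

theorem setLIntegral_comp_smul_of_pos (f : E → ENNReal) {R : ℝ} (s : Set E) (hR : 0 < R) :
    ∫⁻ x in s, f (R • x) ∂μ = ENNReal.ofReal (R ^ finrank ℝ E)⁻¹ * ∫⁻ x in R • s, f x ∂μ := by
  have hemb : MeasurableEmbedding (R • · : E → E) :=
    (Homeomorph.smul (Units.mk0 R hR.ne')).measurableEmbedding
  rw [(MeasurePreserving.mk (μa := μ) hemb.measurable rfl).setLIntegral_comp_emb hemb,
    Measure.map_addHaar_smul μ hR.ne', setLIntegral_smul_measure, Set.image_smul,
    abs_of_pos (by positivity), smul_eq_mul]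

theorem lintegral_ball_zero_rpow_neg_norm (s : ℝ) {R : ℝ} (hR : 0 < R) :
    ∫⁻ y in ball 0 R, ENNReal.ofReal (‖y‖ ^ (-s)) ∂μ =
      ENNReal.ofReal (R ^ finrank ℝ E * R ^ (-s)) *
        ∫⁻ y in ball 0 1, ENNReal.ofReal (‖y‖ ^ (-s)) ∂μ := by
  have hRd : 0 < R ^ finrank ℝ E := by positivity
  have hscale := setLIntegral_comp_smul_of_pos μ (fun y ↦ ENNReal.ofReal (‖y‖ ^ (-s)))
    (ball 0 1) hR
  simp only [norm_smul, Real.norm_of_nonneg hR.le, Real.mul_rpow hR.le (norm_nonneg _),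
    ENNReal.ofReal_mul (Real.rpow_nonneg hR.le _), smul_unitBall_of_pos hR] at hscale
  rw [lintegral_const_mul _ (measurable_norm.pow_const _).ennreal_ofReal] at hscale
  rw [ENNReal.ofReal_mul hRd.le, mul_assoc, hscale, ← mul_assoc, ← ENNReal.ofReal_mul hRd.le,
    mul_inv_cancel₀ hRd.ne', ENNReal.ofReal_one, one_mul]

theorem exists_lintegral_ball_zero_rpow_neg_norm_eq [Nontrivial E] {s : ℝ}
    (hs : s < finrank ℝ E) :
    ∃ K : ℝ, 0 ≤ K ∧ ∀ R : ℝ, 0 < R → ∫⁻ y in ball 0 R, ENNReal.ofReal (‖y‖ ^ (-s)) ∂μ =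
      ENNReal.ofReal (K * R ^ (-s)) * μ (ball 0 R) := by
  have hI : ∫⁻ y in ball (0 : E) 1, ENNReal.ofReal (‖y‖ ^ (-s)) ∂μ ≠ ⊤ := by
    refine (Integrable.lintegral_lt_top ?_).ne
    refine integrableOn_ball_of_norm_le_rpow (C := 1) finrank_pos hs
      (.of_forall fun y ↦ ?_) (measurable_norm.pow_const _).aestronglyMeasurable
    rw [one_mul, Real.norm_of_nonneg (Real.rpow_nonneg (norm_nonneg y) _)]
  have hB : μ (ball 0 1) ≠ 0 := (measure_ball_pos μ 0 one_pos).ne'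
  obtain ⟨K, hK0, hIK⟩ : ∃ K : ℝ, 0 ≤ K ∧
      ∫⁻ y in ball (0 : E) 1, ENNReal.ofReal (‖y‖ ^ (-s)) ∂μ = ENNReal.ofReal K * μ (ball 0 1) :=
    ⟨_, ENNReal.toReal_nonneg, by rw [ENNReal.ofReal_toReal (ENNReal.div_ne_top hI hB),
      ENNReal.div_mul_cancel hB measure_ball_lt_top.ne]⟩
  refine ⟨K, hK0, fun R hR ↦ ?_⟩
  rw [lintegral_ball_zero_rpow_neg_norm μ s hR, hIK, Measure.addHaar_ball_of_pos μ _ hR,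
    ENNReal.ofReal_mul (by positivity), ENNReal.ofReal_mul hK0]
  ring

theorem exists_lintegral_ball_rpow_neg_norm_le {s : ℝ} (hs0 : 0 ≤ s) (hsd : s < finrank ℝ E) :
    ∃ C : ℝ, 0 < C ∧ ∀ x : E, x ≠ 0 → ∀ r : ℝ, 0 < r →
      ∫⁻ y in ball x r, ENNReal.ofReal (‖y‖ ^ (-s)) ∂μ ≤
        ENNReal.ofReal (C * ‖x‖ ^ (-s)) * μ (ball x r) := by
  have : Nontrivial E := nontrivial_of_finrank_pos (R := ℝ) (by exact_mod_cast hs0.trans_lt hsd)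
  obtain ⟨K, hK0, hK⟩ := exists_lintegral_ball_zero_rpow_neg_norm_eq μ hsd
  refine ⟨max (2 ^ s) (K * 3 ^ finrank ℝ E), lt_max_of_lt_left (by positivity),
    fun x hx r hr ↦ ?_⟩
  have hx0 : 0 < ‖x‖ := norm_pos_iff.2 hx
  rcases le_or_gt (2 * r) ‖x‖ with hfar | hnear
  · calc ∫⁻ y in ball x r, ENNReal.ofReal (‖y‖ ^ (-s)) ∂μ
        ≤ ∫⁻ _ in ball x r, ENNReal.ofReal (2 ^ s * ‖x‖ ^ (-s)) ∂μ :=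
          setLIntegral_mono measurable_const fun y hy ↦
            ENNReal.ofReal_le_ofReal (rpow_neg_norm_le_of_mem_ball hs0 hfar hy)
      _ = ENNReal.ofReal (2 ^ s * ‖x‖ ^ (-s)) * μ (ball x r) := setLIntegral_const _ _
      _ ≤ _ := by gcongr; exact le_max_left _ _
  · calc ∫⁻ y in ball x r, ENNReal.ofReal (‖y‖ ^ (-s)) ∂μ
        ≤ ∫⁻ y in ball 0 (3 * r), ENNReal.ofReal (‖y‖ ^ (-s)) ∂μ :=
          lintegral_mono_set (ball_subset_ball' (by rw [dist_zero_right]; linarith))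
      _ = ENNReal.ofReal (K * (3 * r) ^ (-s)) *
            (ENNReal.ofReal (3 ^ finrank ℝ E) * μ (ball x r)) := by
          rw [hK _ (by positivity), Measure.addHaar_ball_mul_of_pos μ 0 three_pos,
            Measure.addHaar_ball_center μ x]
      _ ≤ ENNReal.ofReal (K * 3 ^ finrank ℝ E * ‖x‖ ^ (-s)) * μ (ball x r) := by
          rw [← mul_assoc, ← ENNReal.ofReal_mul (by positivity), mul_right_comm]
          gcongr ENNReal.ofReal ?_ * _
          exact mul_le_mul_of_nonneg_left
            (Real.rpow_le_rpow_of_nonpos hx0 (by linarith) (neg_nonpos.2 hs0)) (by positivity)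
      _ ≤ _ := by gcongr; exact le_max_right _ _

end AddHaar

/-- For `0 ≤ α < 1` and `n ≥ 1`, `|x|^{−nα}` is an `A₁` weight on `ℝⁿ`: there is
`C = C(n, α)` with `(1/|B(x,r)|) ∫_{B(x,r)} |y|^{−nα} dy ≤ C |x|^{−nα}` for all
`x ≠ 0` and `r > 0`. -/
theorem stmt8 (n : ℕ) (hn : 1 ≤ n) (α : ℝ) (hα0 : 0 ≤ α) (hα1 : α < 1) :
    ∃ C : ℝ, 0 < C ∧ ∀ x : EuclideanSpace ℝ (Fin n), x ≠ 0 → ∀ r : ℝ, 0 < r →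
      ∫⁻ y in Metric.ball x r, ENNReal.ofReal (‖y‖ ^ (-((n : ℝ) * α))) ≤
        ENNReal.ofReal (C * ‖x‖ ^ (-((n : ℝ) * α))) * volume (Metric.ball x r) := by
  have hn0 : (0 : ℝ) < n := by exact_mod_cast hn
  refine exists_lintegral_ball_rpow_neg_norm_le volume (by positivity) ?_
  rw [finrank_euclideanSpace_fin]
  exact mul_lt_of_lt_one_right hn0 hα1
end

section
/- Let Q ≥ 0 be continuous on ℝⁿ with μ = (1/c_n) Q(z)e^{nw(z)}dz a finite measure of total mass α < 1, where w(x) = (1/c_n) ∫ log(|z|/|x−z|) Q(z)e^{nw(z)} dz + C. Then e^{nw} is an A₁ weight: M(e^{nw})(x) ≤ C' e^{nw(x)} for all x ∈ ℝⁿ, with C' depending only on n and α. -/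
/-!
Up to the constant `C₀`, `w` is the logarithmic potential of the measure `(1/c) Q e^{nw} dz` of
mass `α`. Normalising it to a probability measure `ν`, one gets
`n (w y - w x) = ⨍ nα log (‖x - z‖ / ‖y - z‖) dν(z)`, so Jensen's inequality gives
`e^{n w y} ≤ e^{n w x} ⨍ (‖x - z‖ / ‖y - z‖) ^ {nα} dν(z)`. Integrating over `y ∈ B(x, r)` and
exchanging the integrals, it remains to bound `⨍_{B(x,r)} (‖x - z‖ / ‖y - z‖) ^ {nα} dy`
uniformly in `z`: this is the `A₁` property of `‖·‖ ^ (-nα)`, which holds because `nα < n`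
makes `‖·‖ ^ (-nα)` integrable near the origin, and scaling reduces every ball centred at `z`
to the unit ball.
-/

open Metric MeasureTheory Module
open scoped ENNReal

theorem Real.exp_mul_log_le_rpow {β t s : ℝ} (hβ : 0 ≤ β) (ht : 0 ≤ t) (hts : t ≤ s)
    (hs : 1 ≤ s) : Real.exp (β * Real.log t) ≤ s ^ β := by
  rcases ht.eq_or_lt with rfl | ht
  · simpa using Real.one_le_rpow hs hβ
  · rw [mul_comm, ← Real.rpow_def_of_pos ht]
    exact Real.rpow_le_rpow ht.le hts hβ

section PowerWeight

variable {E : Type*} [NormedAddCommGroup E]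

theorem exp_mul_log_div_norm_sub_le {β r : ℝ} (hβ : 0 ≤ β) {x y : E} (hy : y ∈ ball x r)
    (z : E) : Real.exp (β * Real.log (‖x - z‖ / ‖y - z‖)) ≤
      2 ^ β * (1 + (ball z r).indicator (fun y => (r / ‖y - z‖) ^ β) y) := by
  have hr : 0 < r := pos_of_mem_ball hy
  have hind : 0 ≤ (ball z r).indicator (fun y => (r / ‖y - z‖) ^ β) y :=
    Set.indicator_nonneg (fun y _ => by positivity) y
  by_cases hnear : ‖x - z‖ / ‖y - z‖ ≤ 2
  · calc Real.exp (β * Real.log (‖x - z‖ / ‖y - z‖)) ≤ 2 ^ β :=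
          Real.exp_mul_log_le_rpow hβ (by positivity) hnear one_le_two
      _ ≤ _ := le_mul_of_one_le_right (by positivity) (by linarith)
  · -- `z` is much closer to `y` than to `x`, so `‖x - z‖ < 2r` and `y ∈ ball z r`
    have hyz0 : 0 < ‖y - z‖ := (norm_nonneg _).lt_of_ne fun h => by simp [← h] at hnear
    rw [not_le, lt_div_iff₀ hyz0] at hnear
    rw [mem_ball, dist_eq_norm] at hy
    have htri : ‖x - z‖ ≤ ‖y - x‖ + ‖y - z‖ := by
      simpa [norm_sub_rev y x] using norm_sub_le_norm_sub_add_norm_sub x y z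
    have hyz : ‖y - z‖ < r := by linarith
    rw [Set.indicator_of_mem (by rwa [mem_ball, dist_eq_norm])]
    calc Real.exp (β * Real.log (‖x - z‖ / ‖y - z‖)) ≤ (2 * (r / ‖y - z‖)) ^ β := by
          refine Real.exp_mul_log_le_rpow hβ (by positivity) ?_ ?_
          · rw [← mul_div_assoc]; gcongr; linarith
          · rw [← mul_div_assoc, le_div_iff₀ hyz0]; linarith
      _ ≤ 2 ^ β * (1 + (r / ‖y - z‖) ^ β) := by
          rw [Real.mul_rpow zero_le_two (by positivity)]
          gcongr
          linarith

variable [MeasurableSpace E] (μ : Measure E)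

/-- The `A₁` constant of the power weight `‖·‖ ^ (-β)`: splitting `B(x, r)` according to whether
`‖x - z‖ ≤ 2 ‖y - z‖` bounds every average `⨍_{B(x, r)} (‖x - z‖ / ‖y - z‖) ^ β dy` by it. -/
noncomputable def a1Const (β : ℝ) : ℝ≥0∞ :=
  ENNReal.ofReal (2 ^ β) * (1 + ⨍⁻ u in ball 0 1, ENNReal.ofReal (‖u‖ ^ (-β)) ∂μ)

theorem a1Const_ne_zero (β : ℝ) : a1Const μ β ≠ 0 :=
  mul_ne_zero (by positivity) (by simp)

variable [NormedSpace ℝ E] [FiniteDimensional ℝ E] [BorelSpace E] [μ.IsAddHaarMeasure]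

theorem lintegral_comp_add_smul (g : E → ℝ≥0∞) (z : E) {r : ℝ} (hr : r ≠ 0) :
    ∫⁻ u, g (z + r • u) ∂μ = ENNReal.ofReal |(r ^ finrank ℝ E)⁻¹| * ∫⁻ y, g y ∂μ := by
  let e : E ≃ᵐ E := (Homeomorph.smul (isUnit_iff_ne_zero.2 hr).unit).toMeasurableEquiv
  calc ∫⁻ u, g (z + r • u) ∂μ = ∫⁻ v, g (z + v) ∂(μ.map (r • ·)) :=
        (lintegral_map_equiv (fun v => g (z + v)) e).symm
    _ = ENNReal.ofReal |(r ^ finrank ℝ E)⁻¹| * ∫⁻ v, g (z + v) ∂μ := by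
        rw [Measure.map_addHaar_smul μ hr, lintegral_smul_measure, smul_eq_mul]
    _ = _ := by rw [lintegral_add_left_eq_self]

theorem setLIntegral_ball_eq (g : E → ℝ≥0∞) (z : E) {r : ℝ} (hr : 0 < r) :
    ∫⁻ y in ball z r, g y ∂μ =
      ENNReal.ofReal (r ^ finrank ℝ E) * ∫⁻ u in ball 0 1, g (z + r • u) ∂μ := by
  have hball : ∀ u : E, z + r • u ∈ ball z r ↔ u ∈ ball (0 : E) 1 := fun u => by
    simp [norm_smul, abs_of_pos hr, hr]
  have hind : ∀ u, (ball z r).indicator g (z + r • u) =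
      (ball (0 : E) 1).indicator (fun u => g (z + r • u)) u := fun u => by
    by_cases hu : u ∈ ball (0 : E) 1
    · rw [Set.indicator_of_mem ((hball u).2 hu), Set.indicator_of_mem hu]
    · rw [Set.indicator_of_notMem (mt (hball u).1 hu), Set.indicator_of_notMem hu]
  have hpow : (0 : ℝ) < r ^ finrank ℝ E := by positivity
  rw [← lintegral_indicator measurableSet_ball, ← lintegral_indicator measurableSet_ball,
    ← funext hind, lintegral_comp_add_smul μ _ z hr.ne', abs_of_pos (inv_pos.2 hpow),
    ENNReal.ofReal_inv_of_pos hpow, ← mul_assoc,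
    ENNReal.mul_inv_cancel (by simpa using hpow) ENNReal.ofReal_ne_top, one_mul]

theorem setLAverage_ball_rpow_div_norm_sub (β : ℝ) (z : E) {r : ℝ} (hr : 0 < r) :
    ⨍⁻ y in ball z r, ENNReal.ofReal ((r / ‖y - z‖) ^ β) ∂μ =
      ⨍⁻ u in ball 0 1, ENNReal.ofReal (‖u‖ ^ (-β)) ∂μ := by
  have hscale : ∀ u : E, (r / ‖z + r • u - z‖) ^ β = ‖u‖ ^ (-β) := fun u => by
    rw [add_sub_cancel_left, norm_smul, Real.norm_of_nonneg hr.le, div_mul_cancel_left₀ hr.ne',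
      Real.inv_rpow (norm_nonneg u), Real.rpow_neg (norm_nonneg u)]
  have hpow : ENNReal.ofReal (r ^ finrank ℝ E) ≠ 0 := by
    rw [ENNReal.ofReal_ne_zero_iff]; positivity
  simp_rw [setLAverage_eq, setLIntegral_ball_eq μ _ z hr, hscale,
    Measure.addHaar_ball_of_pos μ z hr]
  exact ENNReal.mul_div_mul_left _ _ hpow ENNReal.ofReal_ne_top

theorem a1Const_lt_top (hd : 1 ≤ finrank ℝ E) {β : ℝ} (hβ : β < finrank ℝ E) :
    a1Const μ β < ∞ := by
  have hint : IntegrableOn (fun u : E => ‖u‖ ^ (-β)) (ball 0 1) μ :=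
    integrableOn_ball_of_norm_le_rpow hd hβ (C := 1)
      (Filter.Eventually.of_forall fun u => by
        rw [one_mul, Real.norm_of_nonneg (Real.rpow_nonneg (norm_nonneg u) _)])
      (continuous_norm.measurable.pow_const _).aestronglyMeasurable
  exact ENNReal.mul_lt_top ENNReal.ofReal_lt_top
    (ENNReal.add_lt_top.2 ⟨ENNReal.one_lt_top, laverage_lt_top hint.lintegral_lt_top.ne⟩)

theorem setLIntegral_exp_mul_log_div_norm_sub_le {β : ℝ} (hβ : 0 ≤ β) (x z : E) {r : ℝ}
    (hr : 0 < r) :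
    ∫⁻ y in ball x r, ENNReal.ofReal (Real.exp (β * Real.log (‖x - z‖ / ‖y - z‖))) ∂μ ≤
      a1Const μ β * μ (ball x r) := by
  set g : E → ℝ≥0∞ := fun y => ENNReal.ofReal ((r / ‖y - z‖) ^ β)
  have hpointwise : ∀ y ∈ ball x r,
      ENNReal.ofReal (Real.exp (β * Real.log (‖x - z‖ / ‖y - z‖))) ≤
        ENNReal.ofReal (2 ^ β) * (1 + (ball z r).indicator g y) := fun y hy => by
    refine (ENNReal.ofReal_le_ofReal (exp_mul_log_div_norm_sub_le hβ hy z)).trans_eq ?_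
    rw [ENNReal.ofReal_mul (by positivity),
      ENNReal.ofReal_add zero_le_one (Set.indicator_nonneg (fun y _ => by positivity) y),
      ENNReal.ofReal_one]
    by_cases hyz : y ∈ ball z r <;> simp [hyz, g]
  calc _ ≤ ∫⁻ y in ball x r, ENNReal.ofReal (2 ^ β) * (1 + (ball z r).indicator g y) ∂μ :=
        setLIntegral_mono' measurableSet_ball hpointwise
    _ = ENNReal.ofReal (2 ^ β) *
          (μ (ball x r) + ∫⁻ y in ball x r, (ball z r).indicator g y ∂μ) := by
        rw [lintegral_const_mul' _ _ ENNReal.ofReal_ne_top, lintegral_add_left measurable_const,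
          setLIntegral_const, one_mul]
    _ ≤ ENNReal.ofReal (2 ^ β) * (μ (ball x r) + ∫⁻ y in ball z r, g y ∂μ) := by
        gcongr _ * (_ + ?_)
        rw [lintegral_indicator measurableSet_ball, Measure.restrict_restrict measurableSet_ball]
        exact lintegral_mono_set Set.inter_subset_left
    _ = _ := by
        rw [← measure_mul_setLAverage _ measure_ball_lt_top.ne,
          setLAverage_ball_rpow_div_norm_sub μ β z hr, Measure.addHaar_ball_center μ z,
          ← Measure.addHaar_ball_center μ x, a1Const]
        ring

end PowerWeight

section Jensen

variable {X Y : Type*} [MeasurableSpace X] [MeasurableSpace Y]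

theorem ofReal_exp_integral_le_lintegral {P : Measure Y} [IsProbabilityMeasure P] {u : Y → ℝ}
    (hu : Integrable u P) :
    ENNReal.ofReal (Real.exp (∫ z, u z ∂P)) ≤ ∫⁻ z, ENNReal.ofReal (Real.exp (u z)) ∂P := by
  have hexp_nonneg : 0 ≤ᵐ[P] fun z => Real.exp (u z) := ae_of_all _ fun z => (Real.exp_pos _).le
  by_cases hexp : Integrable (fun z => Real.exp (u z)) P
  · rw [← ofReal_integral_eq_lintegral_ofReal hexp hexp_nonneg]
    exact ENNReal.ofReal_le_ofReal <| convexOn_exp.map_integral_le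
      Real.continuous_exp.continuousOn isClosed_univ (ae_of_all _ fun _ => Set.mem_univ _) hu hexp
  · rw [← lintegral_ofReal_ne_top_iff_integrable
      (Real.continuous_exp.comp_aestronglyMeasurable hu.aestronglyMeasurable) hexp_nonneg,
      not_not] at hexp
    exact hexp ▸ le_top

theorem setLIntegral_exp_le_of_eq_add_average (μ : Measure X) [SFinite μ] (ν : Measure Y)
    [IsFiniteMeasure ν] [NeZero ν] {k : X → Y → ℝ} (hk : Measurable (Function.uncurry k))
    (hki : ∀ y, Integrable (k y) ν) {s : Set X} {v : X → ℝ} {a : ℝ}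
    (hv : ∀ y, v y = a + ⨍ z, k y z ∂ν) {K : ℝ≥0∞}
    (hK : ∀ z, ∫⁻ y in s, ENNReal.ofReal (Real.exp (k y z)) ∂μ ≤ K) :
    ∫⁻ y in s, ENNReal.ofReal (Real.exp (v y)) ∂μ ≤ ENNReal.ofReal (Real.exp a) * K := by
  set P := (ν Set.univ)⁻¹ • ν
  have hjensen : ∀ y, ENNReal.ofReal (Real.exp (v y)) ≤
      ENNReal.ofReal (Real.exp a) * ∫⁻ z, ENNReal.ofReal (Real.exp (k y z)) ∂P := fun y => by
    rw [hv y, Real.exp_add, ENNReal.ofReal_mul (Real.exp_pos a).le]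
    gcongr
    exact ofReal_exp_integral_le_lintegral (hki y).to_average
  have hmeas : AEMeasurable (Function.uncurry fun y z => ENNReal.ofReal (Real.exp (k y z)))
      ((μ.restrict s).prod P) :=
    (Real.measurable_exp.comp hk).ennreal_ofReal.aemeasurable
  calc ∫⁻ y in s, ENNReal.ofReal (Real.exp (v y)) ∂μ
      ≤ ∫⁻ y in s, ENNReal.ofReal (Real.exp a) *
          ∫⁻ z, ENNReal.ofReal (Real.exp (k y z)) ∂P ∂μ :=
        lintegral_mono hjensen
    _ = ENNReal.ofReal (Real.exp a) *
          ∫⁻ z, ∫⁻ y in s, ENNReal.ofReal (Real.exp (k y z)) ∂μ ∂P := by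
        rw [lintegral_const_mul' _ _ ENNReal.ofReal_ne_top, lintegral_lintegral_swap hmeas]
    _ ≤ ENNReal.ofReal (Real.exp a) * ∫⁻ _, K ∂P := by gcongr with z; exact hK z
    _ = ENNReal.ofReal (Real.exp a) * K := by rw [lintegral_const, measure_univ, mul_one]

end Jensen

section WithDensity

variable {X : Type*} [MeasurableSpace X] {μ : Measure X} {f : X → ℝ}

theorem withDensity_ofReal_apply_univ (hf0 : ∀ z, 0 ≤ f z) (hf : Integrable f μ) :
    μ.withDensity (fun z => ENNReal.ofReal (f z)) Set.univ = ENNReal.ofReal (∫ z, f z ∂μ) := by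
  rw [withDensity_apply _ MeasurableSet.univ, Measure.restrict_univ,
    ofReal_integral_eq_lintegral_ofReal hf (ae_of_all _ hf0)]

theorem average_withDensity_ofReal (hf0 : ∀ z, 0 ≤ f z) (hf : Integrable f μ) (g : X → ℝ) :
    ⨍ z, g z ∂μ.withDensity (fun z => ENNReal.ofReal (f z)) =
      (∫ z, f z ∂μ)⁻¹ * ∫ z, g z * f z ∂μ := by
  rw [average_eq, integral_withDensity_eq_integral_toReal_smul₀ hf.1.aemeasurable.ennreal_ofReal
    (ae_of_all _ fun _ => ENNReal.ofReal_lt_top), measureReal_def,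
    withDensity_ofReal_apply_univ hf0 hf, ENNReal.toReal_ofReal (integral_nonneg hf0), smul_eq_mul]
  simp_rw [ENNReal.toReal_ofReal (hf0 _), smul_eq_mul, mul_comm (f _)]

theorem integrable_withDensity_ofReal_iff (hf0 : ∀ z, 0 ≤ f z) (hf : AEMeasurable f μ)
    {g : X → ℝ} : Integrable g (μ.withDensity fun z => ENNReal.ofReal (f z)) ↔
      Integrable (fun z => g z * f z) μ := by
  rw [integrable_withDensity_iff_integrable_smul₀' hf.ennreal_ofReal
    (ae_of_all _ fun _ => ENNReal.ofReal_lt_top)]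
  simp_rw [ENNReal.toReal_ofReal (hf0 _), smul_eq_mul, mul_comm (f _)]

end WithDensity

section Potential

variable {E : Type*} [NormedAddCommGroup E] [MeasurableSpace E] (μ : Measure E) {f w : E → ℝ}

theorem eq_of_integral_nonpos (hf0 : ∀ z, 0 ≤ f z) (hf : Integrable f μ) {c C₀ : ℝ}
    (hw : ∀ x, w x = 1 / c * (∫ z, Real.log (‖z‖ / ‖x - z‖) * f z ∂μ) + C₀) (hc : 0 < c)
    (hmass : 1 / c * ∫ z, f z ∂μ ≤ 0) (x : E) : w x = C₀ := by
  have hI : ∫ z, f z ∂μ = 0 :=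
    le_antisymm (nonpos_of_mul_nonpos_right hmass (one_div_pos.2 hc)) (integral_nonneg hf0)
  have hf_ae : f =ᵐ[μ] 0 := (integral_eq_zero_iff_of_nonneg hf0 hf).1 hI
  rw [hw x, integral_eq_zero_of_ae (hf_ae.mono fun z hz => by simp [hz]), mul_zero, zero_add]

variable [NullSingletonClass μ]

theorem log_div_norm_sub_mul_ae_eq (f : E → ℝ) (x y : E) :
    (fun z => Real.log (‖z‖ / ‖y - z‖) * f z - Real.log (‖z‖ / ‖x - z‖) * f z) =ᵐ[μ]
      fun z => Real.log (‖x - z‖ / ‖y - z‖) * f z := by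
  filter_upwards [(Set.toFinite {0, x, y}).countable.ae_notMem μ] with z hz
  simp only [Set.mem_insert_iff, Set.mem_singleton_iff, not_or] at hz
  obtain ⟨hz0, hzx, hzy⟩ := hz
  have hx : ‖x - z‖ ≠ 0 := norm_ne_zero_iff.2 (sub_ne_zero.2 (Ne.symm hzx))
  have hy : ‖y - z‖ ≠ 0 := norm_ne_zero_iff.2 (sub_ne_zero.2 (Ne.symm hzy))
  rw [Real.log_div (norm_ne_zero_iff.2 hz0) hy, Real.log_div (norm_ne_zero_iff.2 hz0) hx,
    Real.log_div hx hy]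
  ring

theorem integrable_log_div_norm_sub_withDensity (hf0 : ∀ z, 0 ≤ f z) (hf : Integrable f μ)
    (hlog : ∀ x, Integrable (fun z => Real.log (‖z‖ / ‖x - z‖) * f z) μ) (x y : E) :
    Integrable (fun z => Real.log (‖x - z‖ / ‖y - z‖))
      (μ.withDensity fun z => ENNReal.ofReal (f z)) :=
  (integrable_withDensity_ofReal_iff hf0 hf.1.aemeasurable).2 <|
    ((hlog y).sub (hlog x)).congr (log_div_norm_sub_mul_ae_eq μ f x y)

theorem mul_eq_add_average_log_div_norm_sub (hf0 : ∀ z, 0 ≤ f z) (hf : Integrable f μ)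
    (hlog : ∀ x, Integrable (fun z => Real.log (‖z‖ / ‖x - z‖) * f z) μ) {c C₀ α : ℝ}
    (hw : ∀ x, w x = 1 / c * (∫ z, Real.log (‖z‖ / ‖x - z‖) * f z ∂μ) + C₀)
    (hmass : 1 / c * ∫ z, f z ∂μ = α) (hα : α ≠ 0) (m : ℝ) (x y : E) :
    m * w y = m * w x + ⨍ z, m * α * Real.log (‖x - z‖ / ‖y - z‖)
      ∂μ.withDensity fun z => ENNReal.ofReal (f z) := by
  have hc : c ≠ 0 := by rintro rfl; simp [← hmass] at hα
  have hdiff : w y - w x = 1 / c * ∫ z, Real.log (‖x - z‖ / ‖y - z‖) * f z ∂μ := by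
    rw [hw y, hw x, ← integral_congr_ae (log_div_norm_sub_mul_ae_eq μ f x y),
      integral_sub (hlog y) (hlog x)]
    ring
  have hI : ∫ z, f z ∂μ = c * α := by rw [← hmass]; field_simp
  rw [average_withDensity_ofReal hf0 hf, hI]
  simp_rw [mul_assoc (m * α), integral_const_mul]
  rw [show (c * α)⁻¹ * (m * α * ∫ z, Real.log (‖x - z‖ / ‖y - z‖) * f z ∂μ) =
      m * (1 / c * ∫ z, Real.log (‖x - z‖ / ‖y - z‖) * f z ∂μ) by field_simp, ← hdiff]
  ring

end Potential

section A1Bound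

variable {E : Type*} [NormedAddCommGroup E] [NormedSpace ℝ E] [FiniteDimensional ℝ E]
  [MeasurableSpace E] [BorelSpace E] [Nontrivial E] (μ : Measure E) [μ.IsAddHaarMeasure]

theorem setLIntegral_exp_le_of_potential {f w : E → ℝ} (hf0 : ∀ z, 0 ≤ f z)
    (hf : Integrable f μ) (hlog : ∀ x, Integrable (fun z => Real.log (‖z‖ / ‖x - z‖) * f z) μ)
    {c C₀ α m : ℝ} (hw : ∀ x, w x = 1 / c * (∫ z, Real.log (‖z‖ / ‖x - z‖) * f z ∂μ) + C₀)
    (hmass : 1 / c * ∫ z, f z ∂μ = α) (hα : 0 < α) (hm : 0 ≤ m) (x : E) {r : ℝ} (hr : 0 < r) :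
    ∫⁻ y in ball x r, ENNReal.ofReal (Real.exp (m * w y)) ∂μ ≤
      ENNReal.ofReal (Real.exp (m * w x)) * (a1Const μ (m * α) * μ (ball x r)) := by
  set ν := μ.withDensity fun z => ENNReal.ofReal (f z)
  have : IsFiniteMeasure ν := isFiniteMeasure_withDensity_ofReal hf.2
  have hI : ∫ z, f z ∂μ ≠ 0 := by rintro h; simp [h, hα.ne] at hmass
  have : NeZero ν := ⟨Measure.measure_univ_ne_zero.1 <| by
    simpa [ν, withDensity_ofReal_apply_univ hf0 hf] using (integral_nonneg hf0).lt_of_ne' hI⟩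
  exact setLIntegral_exp_le_of_eq_add_average μ ν (by fun_prop)
    (fun y => (integrable_log_div_norm_sub_withDensity μ hf0 hf hlog x y).const_mul _)
    (mul_eq_add_average_log_div_norm_sub μ hf0 hf hlog hw hmass hα.ne' m x)
    fun z => setLIntegral_exp_mul_log_div_norm_sub_le μ (by positivity) x z hr

end A1Bound

/-- Suppose `Q ≥ 0` is continuous on `ℝⁿ` with `μ = (1/c_n) Q e^{nw} dx` of finite
total mass `α < 1`, where `w(x) = (1/c_n) ∫ log(|z|/|x−z|) Q(z) e^{nw(z)} dz + C₀`.
Then `e^{nw}` is an `A₁` weight: `M(e^{nw})(x) ≤ C' e^{nw(x)}` with `C'` depending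
only on `n` (together with the dimensional constant `c_n`) and `α`. -/
theorem stmt10 (n : ℕ) (hn : 1 ≤ n) (c : ℝ) (hc : 0 < c) (α : ℝ) (hα : α < 1) :
    ∃ C' : ℝ, 0 < C' ∧
      ∀ (Q w : EuclideanSpace ℝ (Fin n) → ℝ) (C₀ : ℝ),
        Continuous Q → (∀ z, 0 ≤ Q z) → Continuous w →
        Integrable (fun z => Q z * Real.exp ((n : ℝ) * w z)) →
        (∀ x, Integrable (fun z =>
            Real.log (‖z‖ / ‖x - z‖) * (Q z * Real.exp ((n : ℝ) * w z)))) →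
        (∀ x, w x = (1 / c) *
            (∫ z, Real.log (‖z‖ / ‖x - z‖) * (Q z * Real.exp ((n : ℝ) * w z))) + C₀) →
        (1 / c) * (∫ z, Q z * Real.exp ((n : ℝ) * w z)) = α →
        ∀ (x : EuclideanSpace ℝ (Fin n)) (r : ℝ), 0 < r →
          ∫⁻ y in Metric.ball x r, ENNReal.ofReal (Real.exp ((n : ℝ) * w y)) ≤
            ENNReal.ofReal (C' * Real.exp ((n : ℝ) * w x)) *
              volume (Metric.ball x r) := by
  have : Nonempty (Fin n) := ⟨⟨0, hn⟩⟩
  rcases le_or_gt α 0 with hα0 | hα0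
  · refine ⟨1, one_pos, fun Q w C₀ _ hQ0 _ hfi _ hw hmass x r _ => ?_⟩
    have hconst := eq_of_integral_nonpos volume
      (fun z => mul_nonneg (hQ0 z) (Real.exp_pos _).le) hfi hw hc (hmass.trans_le hα0)
    simp_rw [hconst, one_mul, setLIntegral_const, le_refl]
  · have hK := a1Const_lt_top (volume : Measure (EuclideanSpace ℝ (Fin n)))
      (by simpa using hn) (β := n * α) (by simpa using mul_lt_of_lt_one_right (by positivity) hα)
    refine ⟨(a1Const volume (n * α)).toReal, ENNReal.toReal_pos (a1Const_ne_zero _ _) hK.ne,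
      fun Q w C₀ _ hQ0 _ hfi hlog hw hmass x r hr => ?_⟩
    calc _ ≤ _ := setLIntegral_exp_le_of_potential volume
          (fun z => mul_nonneg (hQ0 z) (Real.exp_pos _).le) hfi hlog hw hmass hα0 n.cast_nonneg x hr
      _ = _ := by
          rw [ENNReal.ofReal_mul ENNReal.toReal_nonneg, ENNReal.ofReal_toReal hK.ne]
          ring
end

section
/- If h ∈ H¹(ℝⁿ) is a compactly supported bounded function with ∫ h = 0, then the function x ↦ ∫ log(|y|/|x−y|) h(y) dy is bounded on ℝⁿ. -/
open Metric MeasureTheory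

section Aux

variable {n : ℕ}

lemma aux_integrable_neglog (hn : 1 ≤ n) :
    Integrable (fun y : EuclideanSpace ℝ (Fin n) => max 0 (-Real.log ‖y‖)) := by
  haveI : Nonempty (Fin n) := ⟨⟨0, hn⟩⟩
  have hmeas : Measurable fun y : EuclideanSpace ℝ (Fin n) => max 0 (-Real.log ‖y‖) :=
    measurable_const.max ((Real.measurable_log.comp measurable_norm).neg)
  refine ⟨hmeas.aestronglyMeasurable, ?_⟩
  have hnorm : ∀ y : EuclideanSpace ℝ (Fin n),
      ‖max 0 (-Real.log ‖y‖)‖ = max 0 (-Real.log ‖y‖) := fun y =>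
    Real.norm_of_nonneg (le_max_left _ _)
  have hsub : ∀ t ∈ Set.Ioi (0:ℝ),
      volume {y : EuclideanSpace ℝ (Fin n) | t < max 0 (-Real.log ‖y‖)}
        ≤ ENNReal.ofReal (Real.exp (-(n:ℝ) * t)) * volume (ball (0:EuclideanSpace ℝ (Fin n)) 1) := by
    intro t ht
    have hset : {y : EuclideanSpace ℝ (Fin n) | t < max 0 (-Real.log ‖y‖)}
        ⊆ ball (0:EuclideanSpace ℝ (Fin n)) (Real.exp (-t)) := by
      intro y hy
      simp only [Set.mem_setOf_eq] at hy
      have ht0 : (0:ℝ) < t := ht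
      have h1 : t < -Real.log ‖y‖ := by
        rcases max_cases (0:ℝ) (-Real.log ‖y‖) with ⟨he, _⟩ | ⟨he, _⟩ <;> rw [he] at hy
        · linarith
        · exact hy
      have hlog : Real.log ‖y‖ < -t := by linarith
      have hy0 : y ≠ 0 := by
        intro h0
        rw [h0, norm_zero, Real.log_zero, neg_zero] at h1
        linarith
      have hny : 0 < ‖y‖ := norm_pos_iff.mpr hy0
      have : ‖y‖ < Real.exp (-t) := by
        calc ‖y‖ = Real.exp (Real.log ‖y‖) := (Real.exp_log hny).symm
        _ < Real.exp (-t) := Real.exp_lt_exp.mpr hlog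
      simpa [mem_ball, dist_zero_right] using this
    calc volume {y : EuclideanSpace ℝ (Fin n) | t < max 0 (-Real.log ‖y‖)}
        ≤ volume (ball (0:EuclideanSpace ℝ (Fin n)) (Real.exp (-t))) := measure_mono hset
      _ = ENNReal.ofReal (Real.exp (-t) ^ Module.finrank ℝ (EuclideanSpace ℝ (Fin n)))
            * volume (ball (0:EuclideanSpace ℝ (Fin n)) 1) :=
          Measure.addHaar_ball _ _ (Real.exp_nonneg _)
      _ = ENNReal.ofReal (Real.exp (-(n:ℝ) * t)) * volume (ball (0:EuclideanSpace ℝ (Fin n)) 1) := by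
          rw [finrank_euclideanSpace_fin, ← Real.exp_nat_mul]
          ring_nf
  have key : ∫⁻ a : EuclideanSpace ℝ (Fin n), ENNReal.ofReal (max 0 (-Real.log ‖a‖)) < ⊤ := by
    rw [lintegral_eq_lintegral_meas_lt (f := fun y : EuclideanSpace ℝ (Fin n) =>
        max 0 (-Real.log ‖y‖)) volume
      (Filter.Eventually.of_forall fun y => le_max_left _ _) hmeas.aemeasurable]
    calc ∫⁻ t in Set.Ioi (0:ℝ), volume {y : EuclideanSpace ℝ (Fin n) | t < max 0 (-Real.log ‖y‖)}
        ≤ ∫⁻ t in Set.Ioi (0:ℝ),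
          ENNReal.ofReal (Real.exp (-(n:ℝ) * t)) * volume (ball (0:EuclideanSpace ℝ (Fin n)) 1) :=
        setLIntegral_mono' measurableSet_Ioi hsub
      _ = (∫⁻ t in Set.Ioi (0:ℝ), ENNReal.ofReal (Real.exp (-(n:ℝ) * t)))
          * volume (ball (0:EuclideanSpace ℝ (Fin n)) 1) :=
        lintegral_mul_const' _ _ (measure_ball_lt_top).ne
      _ < ⊤ := by
        apply ENNReal.mul_lt_top
        · have hpos : (0:ℝ) < (n:ℝ) := by exact_mod_cast hn
          exact (exp_neg_integrableOn_Ioi 0 hpos).lintegral_lt_top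
        · exact measure_ball_lt_top
  rw [hasFiniteIntegral_iff_norm]
  simpa only [hnorm] using key

lemma aux_integrableOn_abs_log (hn : 1 ≤ n) (r : ℝ) (hr : 0 < r) :
    IntegrableOn (fun y : EuclideanSpace ℝ (Fin n) => |Real.log ‖y‖|)
      (ball (0:EuclideanSpace ℝ (Fin n)) r) := by
  have hmeas : Measurable fun y : EuclideanSpace ℝ (Fin n) => |Real.log ‖y‖| :=
    (Real.measurable_log.comp measurable_norm).abs
  have hint : IntegrableOn
      (fun y : EuclideanSpace ℝ (Fin n) => max 0 (-Real.log ‖y‖) + max 0 (Real.log r))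
      (ball (0:EuclideanSpace ℝ (Fin n)) r) :=
    ((aux_integrable_neglog hn).integrableOn).add ((integrableOn_const_iff).mpr
      (Or.inr measure_ball_lt_top))
  refine Integrable.mono' hint hmeas.aestronglyMeasurable ?_
  rw [ae_restrict_iff' measurableSet_ball]
  refine Filter.Eventually.of_forall fun y hy => ?_
  rw [Real.norm_eq_abs, abs_abs]
  have hyr : ‖y‖ < r := by simpa [mem_ball, dist_zero_right] using hy
  have h1 : |Real.log ‖y‖| ≤ max 0 (-Real.log ‖y‖) + max 0 (Real.log ‖y‖) := by
    rcases abs_cases (Real.log ‖y‖) with ⟨he, _⟩ | ⟨he, _⟩ <;> rw [he]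
    · have := le_max_right (0:ℝ) (Real.log ‖y‖); linarith [le_max_left (0:ℝ) (-Real.log ‖y‖)]
    · have := le_max_right (0:ℝ) (-Real.log ‖y‖); linarith [le_max_left (0:ℝ) (Real.log ‖y‖)]
  have h2 : max 0 (Real.log ‖y‖) ≤ max 0 (Real.log r) := by
    rcases eq_or_ne y 0 with rfl | hy0
    · simp [le_max_left]
    · have hny : 0 < ‖y‖ := norm_pos_iff.mpr hy0
      exact max_le_max le_rfl (Real.log_le_log hny hyr.le)
  linarith

end Aux

/-- If `h` is smooth, supported in `B(0,R)`, bounded by `M`, with `∫ h = 0`, then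
`x ↦ ∫ log(|y|/|x−y|) h(y) dy` is bounded on `ℝⁿ`, by a constant depending only on
`n`, `R` and `M`. -/
theorem stmt16 (n : ℕ) (hn : 1 ≤ n) (R M : ℝ) (hR : 0 < R) (hM : 0 ≤ M) :
    ∃ C : ℝ, ∀ h : EuclideanSpace ℝ (Fin n) → ℝ,
      ContDiff ℝ (⊤ : ℕ∞) h →
      (Function.support h ⊆ Metric.ball 0 R) →
      (∀ y, |h y| ≤ M) →
      (∫ y, h y) = 0 →
      ∀ x : EuclideanSpace ℝ (Fin n),
        |∫ y, Real.log (‖y‖ / ‖x - y‖) * h y| ≤ C := by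
  classical
  haveI : Nonempty (Fin n) := ⟨⟨0, hn⟩⟩
  set E := EuclideanSpace ℝ (Fin n)
  set K : ℝ := ∫ y in ball (0:E) (3*R), |Real.log ‖y‖| with hK
  set V : ℝ := (volume (ball (0:E) R)).toReal with hV
  have hKnn : 0 ≤ K := integral_nonneg fun y => abs_nonneg _
  have hVnn : 0 ≤ V := ENNReal.toReal_nonneg
  have hlog2 : 0 ≤ Real.log 2 := Real.log_nonneg one_le_two
  refine ⟨M * K + M * K + Real.log 2 * M * V, ?_⟩
  intro h hsmooth hsupp hbound hzero x
  have hcont : Continuous h := hsmooth.continuous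
  -- the master dominating function
  set g₀ : E → ℝ := Set.indicator (ball (0:E) (3*R)) (fun y => |Real.log ‖y‖|) with hg₀def
  have hg₀nn : ∀ y, 0 ≤ g₀ y := fun y => Set.indicator_nonneg (fun y _ => abs_nonneg _) y
  have hg₀int : Integrable g₀ :=
    (aux_integrableOn_abs_log hn (3*R) (by linarith)).integrable_indicator measurableSet_ball
  have hMg₀int : Integrable (fun y => M * g₀ y) := hg₀int.const_mul M
  have hMg₀val : (∫ y, M * g₀ y) = M * K := by
    rw [integral_const_mul, hg₀def, integral_indicator measurableSet_ball]
  -- integrability of T1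
  have hT1meas : AEStronglyMeasurable (fun y : E => Real.log ‖y‖ * h y) volume :=
    ((Real.measurable_log.comp measurable_norm).mul hcont.measurable).aestronglyMeasurable
  have hT1bd : ∀ y : E, ‖Real.log ‖y‖ * h y‖ ≤ M * g₀ y := by
    intro y
    by_cases hy : h y = 0
    · rw [hy, mul_zero, norm_zero]
      exact mul_nonneg hM (hg₀nn y)
    · have hmem : y ∈ ball (0:E) (3*R) := by
        have := hsupp (Function.mem_support.mpr hy)
        simp only [mem_ball, dist_zero_right] at this ⊢
        linarith
      rw [hg₀def, Set.indicator_of_mem hmem, Real.norm_eq_abs, abs_mul]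
      calc |Real.log ‖y‖| * |h y| ≤ |Real.log ‖y‖| * M :=
            mul_le_mul_of_nonneg_left (hbound y) (abs_nonneg _)
        _ = M * |Real.log ‖y‖| := mul_comm _ _
  have hT1 : Integrable (fun y : E => Real.log ‖y‖ * h y) :=
    hMg₀int.mono' hT1meas (Filter.Eventually.of_forall hT1bd)
  have hT1val : |∫ y : E, Real.log ‖y‖ * h y| ≤ M * K := by
    rw [← Real.norm_eq_abs, ← hMg₀val]
    exact norm_integral_le_of_norm_le hMg₀int (Filter.Eventually.of_forall hT1bd)
  -- null set to discard
  have hae0 : ∀ᵐ y : E, y ∉ ({0, x} : Set E) := by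
    have : volume ({0, x} : Set E) = 0 :=
      Set.Countable.measure_zero (((Set.finite_singleton x).insert 0).countable) _
    exact measure_eq_zero_iff_ae_notMem.mp this
  rcases le_or_gt ‖x‖ (2*R) with hx | hx
  · -- case ‖x‖ ≤ 2R
    have hT1'meas : AEStronglyMeasurable (fun y : E => Real.log ‖x - y‖ * h y) volume :=
      ((Real.measurable_log.comp (measurable_const.sub measurable_id).norm).mul
        hcont.measurable).aestronglyMeasurable
    have hgxint : Integrable (fun y : E => M * g₀ (x - y)) :=
      hMg₀int.comp_sub_left x
    have hT1'bd : ∀ y : E, ‖Real.log ‖x - y‖ * h y‖ ≤ M * g₀ (x - y) := by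
      intro y
      by_cases hy : h y = 0
      · rw [hy, mul_zero, norm_zero]
        exact mul_nonneg hM (hg₀nn _)
      · have hyR : ‖y‖ < R := by
          have := hsupp (Function.mem_support.mpr hy)
          simpa [mem_ball, dist_zero_right] using this
        have hmem : x - y ∈ ball (0:E) (3*R) := by
          simp only [mem_ball, dist_zero_right]
          calc ‖x - y‖ ≤ ‖x‖ + ‖y‖ := norm_sub_le _ _
            _ < 3 * R := by linarith
        rw [hg₀def, Set.indicator_of_mem hmem, Real.norm_eq_abs, abs_mul]
        calc |Real.log ‖x - y‖| * |h y| ≤ |Real.log ‖x - y‖| * M :=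
              mul_le_mul_of_nonneg_left (hbound y) (abs_nonneg _)
          _ = M * |Real.log ‖x - y‖| := mul_comm _ _
    have hT1' : Integrable (fun y : E => Real.log ‖x - y‖ * h y) :=
      hgxint.mono' hT1'meas (Filter.Eventually.of_forall hT1'bd)
    have hT1'val : |∫ y : E, Real.log ‖x - y‖ * h y| ≤ M * K := by
      have : (∫ y : E, M * g₀ (x - y)) = M * K := by
        rw [integral_sub_left_eq_self (fun y => M * g₀ y) volume x, hMg₀val]
      rw [← Real.norm_eq_abs, ← this]
      exact norm_integral_le_of_norm_le hgxint (Filter.Eventually.of_forall hT1'bd)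
    have hsplit : (∫ y : E, Real.log (‖y‖ / ‖x - y‖) * h y)
        = (∫ y : E, Real.log ‖y‖ * h y) - ∫ y : E, Real.log ‖x - y‖ * h y := by
      rw [← integral_sub hT1 hT1']
      refine integral_congr_ae ?_
      filter_upwards [hae0] with y hy
      by_cases hhy : h y = 0
      · simp [hhy]
      · have hy0 : y ≠ 0 := fun h0 => hy (by simp [h0])
        have hyx : y ≠ x := fun h0 => hy (by simp [h0])
        have hny : ‖y‖ ≠ 0 := norm_ne_zero_iff.mpr hy0
        have hnxy : ‖x - y‖ ≠ 0 := norm_ne_zero_iff.mpr (sub_ne_zero.mpr (Ne.symm hyx))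
        rw [Real.log_div hny hnxy]
        ring
    rw [hsplit]
    calc |(∫ y : E, Real.log ‖y‖ * h y) - ∫ y : E, Real.log ‖x - y‖ * h y|
        ≤ |∫ y : E, Real.log ‖y‖ * h y| + |∫ y : E, Real.log ‖x - y‖ * h y| := abs_sub _ _
      _ ≤ M * K + M * K := add_le_add hT1val hT1'val
      _ ≤ M * K + M * K + Real.log 2 * M * V := by
          nlinarith [mul_nonneg (mul_nonneg hlog2 hM) hVnn]
  · -- case ‖x‖ > 2R
    have hxpos : 0 < ‖x‖ := by linarith
    have hHC : HasCompactSupport h := by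
      apply HasCompactSupport.intro (isCompact_closedBall (0:E) R)
      intro y hy
      by_contra hhy
      exact hy (mem_closedBall_zero_iff.mpr
        (le_of_lt (by simpa [mem_ball, dist_zero_right] using hsupp (Function.mem_support.mpr hhy))))
    have hhint : Integrable h := hcont.integrable_of_hasCompactSupport hHC
    have hT2 : Integrable (fun y : E => Real.log ‖x‖ * h y) := hhint.const_mul _
    have hT2val : (∫ y : E, Real.log ‖x‖ * h y) = 0 := by
      rw [integral_const_mul, hzero, mul_zero]
    -- T3
    set g3 : E → ℝ := Set.indicator (ball (0:E) R) (fun _ => Real.log 2 * M) with hg3def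
    have hg3int : Integrable g3 :=
      ((integrableOn_const_iff).mpr (Or.inr measure_ball_lt_top)).integrable_indicator
        measurableSet_ball
    have hT3meas : AEStronglyMeasurable (fun y : E => Real.log (‖x‖ / ‖x - y‖) * h y) volume :=
      ((Real.measurable_log.comp
        (measurable_const.div (measurable_const.sub measurable_id).norm)).mul
        hcont.measurable).aestronglyMeasurable
    have hT3bd : ∀ y : E, ‖Real.log (‖x‖ / ‖x - y‖) * h y‖ ≤ g3 y := by
      intro y
      by_cases hy : h y = 0
      · rw [hy, mul_zero, norm_zero]
        exact Set.indicator_nonneg (fun _ _ => mul_nonneg hlog2 hM) y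
      · have hyR : ‖y‖ < R := by
          have := hsupp (Function.mem_support.mpr hy)
          simpa [mem_ball, dist_zero_right] using this
        have hmem : y ∈ ball (0:E) R := by simpa [mem_ball, dist_zero_right] using hyR
        rw [hg3def, Set.indicator_of_mem hmem, Real.norm_eq_abs, abs_mul]
        have hlow : ‖x‖ / 2 ≤ ‖x - y‖ := by
          have : ‖x‖ - ‖y‖ ≤ ‖x - y‖ := norm_sub_norm_le x y
          linarith
        have hup : ‖x - y‖ ≤ 2 * ‖x‖ := by
          calc ‖x - y‖ ≤ ‖x‖ + ‖y‖ := norm_sub_le _ _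
            _ ≤ 2 * ‖x‖ := by linarith
        have hxy0 : 0 < ‖x - y‖ := by linarith
        have hratio1 : ‖x‖ / ‖x - y‖ ≤ 2 := by
          rw [div_le_iff₀ hxy0]; linarith
        have hratio2 : (1:ℝ)/2 ≤ ‖x‖ / ‖x - y‖ := by
          rw [le_div_iff₀ hxy0]
          linarith
        have hratpos : 0 < ‖x‖ / ‖x - y‖ := div_pos hxpos hxy0
        have habs : |Real.log (‖x‖ / ‖x - y‖)| ≤ Real.log 2 := by
          rw [abs_le]
          constructor
          · have := Real.log_le_log (by norm_num : (0:ℝ) < 1/2) hratio2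
            rw [show (1:ℝ)/2 = 2⁻¹ by norm_num, Real.log_inv] at this
            linarith
          · exact Real.log_le_log hratpos hratio1
        exact mul_le_mul habs (hbound y) (abs_nonneg _) hlog2
    have hT3 : Integrable (fun y : E => Real.log (‖x‖ / ‖x - y‖) * h y) :=
      hg3int.mono' hT3meas (Filter.Eventually.of_forall hT3bd)
    have hT3val : |∫ y : E, Real.log (‖x‖ / ‖x - y‖) * h y| ≤ Real.log 2 * M * V := by
      have hg3val : (∫ y : E, g3 y) = Real.log 2 * M * V := by
        rw [hg3def, integral_indicator measurableSet_ball, setIntegral_const, smul_eq_mul]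
        rw [measureReal_def]
        ring
      rw [← Real.norm_eq_abs, ← hg3val]
      exact norm_integral_le_of_norm_le hg3int (Filter.Eventually.of_forall hT3bd)
    have hsplit : (∫ y : E, Real.log (‖y‖ / ‖x - y‖) * h y)
        = ((∫ y : E, Real.log ‖y‖ * h y) - ∫ y : E, Real.log ‖x‖ * h y)
          + ∫ y : E, Real.log (‖x‖ / ‖x - y‖) * h y := by
      have heq : (fun y : E => Real.log (‖y‖ / ‖x - y‖) * h y)
          =ᵐ[volume] fun y : E => (Real.log ‖y‖ * h y - Real.log ‖x‖ * h y)
            + Real.log (‖x‖ / ‖x - y‖) * h y := by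
        filter_upwards [hae0] with y hy
        by_cases hhy : h y = 0
        · simp [hhy]
        · have hy0 : y ≠ 0 := fun h0 => hy (by simp [h0])
          have hyR : ‖y‖ < R := by
            have := hsupp (Function.mem_support.mpr hhy)
            simpa [mem_ball, dist_zero_right] using this
          have hny : ‖y‖ ≠ 0 := norm_ne_zero_iff.mpr hy0
          have hnx : ‖x‖ ≠ 0 := ne_of_gt hxpos
          have hnxy : ‖x - y‖ ≠ 0 := by
            have h1 : ‖x‖ - ‖y‖ ≤ ‖x - y‖ := norm_sub_norm_le x y
            have : 0 < ‖x - y‖ := by linarith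
            exact ne_of_gt this
          rw [Real.log_div hny hnxy, Real.log_div hnx hnxy]
          ring
      have hT12 : Integrable (fun y : E => Real.log ‖y‖ * h y - Real.log ‖x‖ * h y) :=
        hT1.sub hT2
      rw [integral_congr_ae heq, integral_add hT12 hT3, integral_sub hT1 hT2]
    rw [hsplit, hT2val, sub_zero]
    calc |(∫ y : E, Real.log ‖y‖ * h y) + ∫ y : E, Real.log (‖x‖ / ‖x - y‖) * h y|
        ≤ |∫ y : E, Real.log ‖y‖ * h y| + |∫ y : E, Real.log (‖x‖ / ‖x - y‖) * h y| :=
          abs_add_le _ _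
      _ ≤ M * K + Real.log 2 * M * V := add_le_add hT1val hT3val
      _ ≤ M * K + M * K + Real.log 2 * M * V := by
          nlinarith [mul_nonneg hM hKnn]
end
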